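/- arXiv:2101.09777 — 9 statements merged into one kernel-verified Lean document; each statement's English description precedes it below -/
import Mathlib

section
/- For all real numbers a, b with 0 < a ≤ 1 and 0 < b ≤ 1, one has ln((a+b)/2) − (ln a + ln b)/2 ≥ (a−b)²/8. -/
/-- Part 1 of the paper's elementary inequality (Proposition `lemma-ineqs`):
for `a, b ∈ (0,1]`, `ln((a+b)/2) − (ln a + ln b)/2 ≥ (a−b)²/8`. -/
theorem log_midpoint_sub_avg_log_ge (a b : ℝ) (ha : 0 < a) (ha1 : a ≤ 1)
    (hb : 0 < b) (hb1 : b ≤ 1) :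
    Real.log ((a + b) / 2) - (Real.log a + Real.log b) / 2 ≥ (a - b) ^ 2 / 8 := by
  have hab : 0 < a + b := by linarith
  set x : ℝ := ((a + b) / 2) ^ 2 / (a * b) with hx
  have hxpos : 0 < x := by positivity
  have hlogx : Real.log x = 2 * Real.log ((a + b) / 2) - (Real.log a + Real.log b) := by
    rw [hx, Real.log_div (by positivity) (by positivity), Real.log_pow,
      Real.log_mul ha.ne' hb.ne']
    ring
  have h1 : 1 - x⁻¹ ≤ Real.log x := Real.one_sub_inv_le_log_of_pos hxpos
  have hxinv : x⁻¹ = 4 * a * b / (a + b) ^ 2 := by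
    rw [hx]
    field_simp
    ring
  have h2 : (a - b) ^ 2 / 4 ≤ 1 - x⁻¹ := by
    rw [hxinv, show (1:ℝ) - 4 * a * b / (a + b) ^ 2 = (a - b) ^ 2 / (a + b) ^ 2 from by
      field_simp; ring]
    gcongr
    nlinarith
  linarith [hlogx ▸ h1]
end

section
/- Let x, y ∈ ℝ^N have nonnegative coordinates with |x| ≤ 1 and |y| ≤ 1, and suppose that for each n, y^n = 0 implies x^n = 0. Then Σ_{n=1}^N x^n (ln x^n − ln y^n) ≥ ‖x−y‖²/4 + |x| − |y|, where every term with x^n = 0 is taken to be 0. -/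
open scoped BigOperators

lemma kl_pointwise (a b : ℝ) (ha : 0 ≤ a) (hb : 0 ≤ b) (ha1 : a ≤ 1) (hb1 : b ≤ 1)
    (h : b = 0 → a = 0) :
    (a - b) ^ 2 / 4 + a - b ≤ a * (Real.log a - Real.log b) := by
  rcases eq_or_lt_of_le hb with hb0 | hb0
  · have ha0 : a = 0 := h hb0.symm
    subst ha0
    rw [← hb0]
    norm_num
  rcases eq_or_lt_of_le ha with ha0 | ha0
  · rw [← ha0]
    simp only [zero_mul]
    nlinarith
  · set p := Real.sqrt a with hp
    set q := Real.sqrt b with hq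
    have hp0 : 0 < p := Real.sqrt_pos.mpr ha0
    have hq0 : 0 < q := Real.sqrt_pos.mpr hb0
    have hpa : p ^ 2 = a := Real.sq_sqrt ha
    have hqb : q ^ 2 = b := Real.sq_sqrt hb
    have hp1 : p ≤ 1 := by nlinarith
    have hq1 : q ≤ 1 := by nlinarith
    have hlog : Real.log a - Real.log b = 2 * (Real.log p - Real.log q) := by
      rw [← hpa, ← hqb, Real.log_pow, Real.log_pow]; push_cast; ring
    have hkey : 1 - q / p ≤ Real.log p - Real.log q := by
      have := Real.one_sub_inv_le_log_of_pos (div_pos hp0 hq0)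
      rw [Real.log_div hp0.ne' hq0.ne'] at this
      rw [inv_div] at this
      linarith
    have h2 : 2 * p ^ 2 - 2 * p * q ≤ a * (Real.log a - Real.log b) := by
      rw [hlog, ← hpa]
      have : p ^ 2 * (2 * (1 - q / p)) ≤ p ^ 2 * (2 * (Real.log p - Real.log q)) := by
        apply mul_le_mul_of_nonneg_left (by linarith) (by positivity)
      calc 2 * p ^ 2 - 2 * p * q = p ^ 2 * (2 * (1 - q / p)) := by
            field_simp
        _ ≤ _ := this
    nlinarith [sq_nonneg (p - q), sq_nonneg (p + q), mul_pos hp0 hq0,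
      mul_nonneg (sq_nonneg (p - q)) (sq_nonneg (p + q))]

/-- Part 2 of the paper's elementary inequality (Proposition `lemma-ineqs`):
a Kullback–Leibler-type inequality for subprobability vectors `x, y ∈ ℝ₊^N`:
`⟨x, ln x − ln y⟩ ≥ ‖x−y‖²/4 + |x| − |y|`.  Terms with `x^n = 0` vanish
(this is automatic here since they are multiplied by `x n`, and `y^n = 0`
forces `x^n = 0`). -/
theorem kl_type_inequality (N : ℕ) (x y : Fin N → ℝ)
    (hx : ∀ n, 0 ≤ x n) (hy : ∀ n, 0 ≤ y n)
    (hx1 : ∑ n, x n ≤ 1) (hy1 : ∑ n, y n ≤ 1)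
    (hxy : ∀ n, y n = 0 → x n = 0) :
    ∑ n, x n * (Real.log (x n) - Real.log (y n)) ≥
      (∑ n, (x n - y n) ^ 2) / 4 + (∑ n, x n) - ∑ n, y n := by
  have key : ∑ n, ((x n - y n) ^ 2 / 4 + x n - y n) ≤
      ∑ n, x n * (Real.log (x n) - Real.log (y n)) := by
    apply Finset.sum_le_sum
    intro n _
    have hxn1 : x n ≤ 1 := le_trans (Finset.single_le_sum (fun i _ => hx i) (Finset.mem_univ n)) hx1
    have hyn1 : y n ≤ 1 := le_trans (Finset.single_le_sum (fun i _ => hy i) (Finset.mem_univ n)) hy1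
    exact kl_pointwise (x n) (y n) (hx n) (hy n) hxn1 hyn1 (hxy n)
  calc (∑ n, (x n - y n) ^ 2) / 4 + (∑ n, x n) - ∑ n, y n
      = ∑ n, ((x n - y n) ^ 2 / 4 + x n - y n) := by
        rw [Finset.sum_sub_distrib, Finset.sum_add_distrib, ← Finset.sum_div]
    _ ≤ _ := key
end

section
/- Let (S,𝒮) be a measurable space, let φ be a measurable set-valued map from S to nonempty compact subsets of ℝ^N, and let (ξ_n)_{n≥1} be a sequence of measurable selectors of φ. Then there exist a measurable selector ξ of φ and measurable functions i_j : S → ℕ, j ≥ 1, with 1 ≤ i_1(s) < i_2(s) < ⋯ for all s, such that lim_{j→∞} ξ_{i_j(s)}(s) = ξ(s) for every s ∈ S. -/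
open Filter Set Metric

noncomputable section MSCSaux

namespace MSCS

attribute [local instance] Classical.propDecidable

variable {S : Type*} [MeasurableSpace S] {N : ℕ}

/-- dense sequence in `ℝ^N` -/
def q (N : ℕ) : ℕ → (Fin N → ℝ) := TopologicalSpace.denseSeq _

lemma denseRange_q (N : ℕ) : DenseRange (q N) := TopologicalSpace.denseRange_denseSeq _

/-- radii -/
def r (j : ℕ) : ℝ := (1/2 : ℝ) ^ j

lemma r_pos (j : ℕ) : 0 < r j := pow_pos (by norm_num) j

/-- characterization of `dite`-`Nat.find` functions, instance-agnostic -/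
lemma dfind_eq_iff {P : ℕ → Prop} [DecidablePred P] [Decidable (∃ n, P n)] (k : ℕ) :
    (if h : ∃ n, P n then Nat.find h else 0) = k ↔
      (P k ∧ ∀ n < k, ¬ P n) ∨ ((∀ n, ¬ P n) ∧ k = 0) := by
  by_cases h : ∃ n, P n
  · rw [dif_pos h, Nat.find_eq_iff h]
    constructor
    · rintro ⟨h1, h2⟩; exact Or.inl ⟨h1, h2⟩
    · rintro (⟨h1, h2⟩ | ⟨h1, _⟩)
      · exact ⟨h1, h2⟩
      · exact absurd h (by push_neg; exact h1)
  · rw [dif_neg h]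
    push_neg at h
    constructor
    · rintro rfl; exact Or.inr ⟨h, rfl⟩
    · rintro (⟨h1, _⟩ | ⟨_, h2⟩)
      · exact absurd h1 (h k)
      · exact h2.symm

/-- measurability of `Nat.find`-style functions -/
lemma measurable_find {P : ℕ → S → Prop} (hP : ∀ k, MeasurableSet {s | P k s})
    {f : S → ℕ}
    (hf : ∀ s k, f s = k ↔ (P k s ∧ ∀ n < k, ¬ P n s) ∨ ((∀ n, ¬ P n s) ∧ k = 0)) :
    Measurable f := by
  apply measurable_to_countable'
  intro k
  have hset : f ⁻¹' {k}
      = ({s | P k s} ∩ ⋂ k' ∈ Finset.range k, {s | ¬ P k' s})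
        ∪ ((⋂ k', {s | ¬ P k' s}) ∩ {s | k = 0}) := by
    ext s
    simp only [Set.mem_preimage, Set.mem_singleton_iff, Set.mem_union, Set.mem_inter_iff,
      Set.mem_iInter, Set.mem_setOf_eq, Finset.mem_range, hf s k]
  rw [hset]
  apply MeasurableSet.union
  · exact (hP k).inter (MeasurableSet.biInter (Finset.range k).countable_toSet
      (fun k' _ => (hP k').compl))
  · apply MeasurableSet.inter (MeasurableSet.iInter (fun k' => (hP k').compl))
    by_cases hk : k = 0
    · simp [hk]
    · simp [hk]

lemma nat_infinite_iff {T : Set ℕ} : T.Infinite ↔ ∀ m : ℕ, ∃ n ∈ T, m < n := by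
  constructor
  · intro h m; exact h.exists_gt m
  · intro h
    apply Set.infinite_of_not_bddAbove
    rintro ⟨m, hm⟩
    obtain ⟨n, hn, hmn⟩ := h m
    exact absurd (hm hn) (not_le.mpr hmn)

variable (ξ : ℕ → S → Fin N → ℝ)

/-- choose the least index of a dense-ball of radius `r j` meeting `D s` in
an infinite set of times. -/
def nextIdx (D : S → Set ℕ) (j : ℕ) (s : S) : ℕ :=
  if h : ∃ k, (D s ∩ {n | dist (ξ n s) (q N k) < r j}).Infinite then Nat.find h else 0

/-- the nested constraint sets -/
def constraint : ℕ → S → Set ℕ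
  | 0 => fun _ => Set.univ
  | j+1 => fun s => constraint j s ∩
      {n | dist (ξ n s) (q N (nextIdx ξ (constraint j) j s)) < r j}

/-- the chosen centers -/
def center (j : ℕ) (s : S) : ℕ := nextIdx ξ (constraint ξ j) j s

lemma constraint_succ (j : ℕ) (s : S) :
    constraint ξ (j+1) s = constraint ξ j s ∩
      {n | dist (ξ n s) (q N (center ξ j s)) < r j} := rfl

lemma constraint_antitone {j j' : ℕ} (h : j ≤ j') (s : S) :
    constraint ξ j' s ⊆ constraint ξ j s := by
  induction h with
  | refl => exact subset_rfl
  | step _ ih => exact Set.inter_subset_left.trans ih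

/-- pigeonhole existence -/
lemma exists_inf {s : S} {K : Set (Fin N → ℝ)} (hK : IsCompact K)
    (hs : ∀ n, ξ n s ∈ K) {D : S → Set ℕ} (hD : (D s).Infinite) (j : ℕ) :
    ∃ k, (D s ∩ {n | dist (ξ n s) (q N k) < r j}).Infinite := by
  have hcover : K ⊆ ⋃ k, ball (q N k) (r j) := by
    intro x hx
    obtain ⟨k, hk⟩ := (denseRange_q N).exists_dist_lt x (r_pos j)
    exact Set.mem_iUnion.2 ⟨k, by simpa [dist_comm] using hk⟩
  obtain ⟨t, ht⟩ := hK.elim_finite_subcover _ (fun k => isOpen_ball) hcover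
  by_contra hcon
  push_neg at hcon
  have : D s ⊆ ⋃ k ∈ t, (D s ∩ {n | dist (ξ n s) (q N k) < r j}) := by
    intro n hn
    have := ht (hs n)
    simp only [Set.mem_iUnion, mem_ball] at this
    obtain ⟨k, hkt, hk⟩ := this
    exact Set.mem_biUnion hkt ⟨hn, hk⟩
  exact hD (Set.Finite.subset (Set.Finite.biUnion t.finite_toSet (fun k _ => hcon k)) this)

lemma constraint_infinite {s : S} {K : Set (Fin N → ℝ)} (hK : IsCompact K)
    (hs : ∀ n, ξ n s ∈ K) : ∀ j, (constraint ξ j s).Infinite ∧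
      (constraint ξ (j+1) s).Infinite := by
  intro j
  induction j with
  | zero =>
    refine ⟨Set.infinite_univ, ?_⟩
    have hex := exists_inf ξ hK hs (D := constraint ξ 0) Set.infinite_univ 0
    rw [constraint_succ]
    unfold center nextIdx
    rw [dif_pos hex]
    exact Nat.find_spec hex
  | succ m ih =>
    refine ⟨ih.2, ?_⟩
    have hex := exists_inf ξ hK hs (D := constraint ξ (m+1)) ih.2 (m+1)
    rw [constraint_succ]
    unfold center nextIdx
    rw [dif_pos hex]
    exact Nat.find_spec hex

lemma mem_constraint_dist {s : S} {n j : ℕ} (h : n ∈ constraint ξ (j+1) s) :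
    dist (ξ n s) (q N (center ξ j s)) < r j := h.2

/-- joint measurability by induction -/
lemma measurable_constraint_center (hξm : ∀ n, Measurable (ξ n)) :
    ∀ j, (∀ n, MeasurableSet {s | n ∈ constraint ξ j s}) ∧ Measurable (center ξ j) := by
  have key : ∀ (D : S → Set ℕ) (j : ℕ), (∀ n, MeasurableSet {s | n ∈ D s}) →
      Measurable (nextIdx ξ D j) := by
    intro D j hD
    apply measurable_find (P := fun k s => (D s ∩ {n | dist (ξ n s) (q N k) < r j}).Infinite)
      (f := nextIdx ξ D j) ?_ (fun s k => dfind_eq_iff k)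
    intro k
    have : {s | (D s ∩ {n | dist (ξ n s) (q N k) < r j}).Infinite}
        = ⋂ m, ⋃ n, ⋃ (_ : m < n), ({s | n ∈ D s} ∩ {s | dist (ξ n s) (q N k) < r j}) := by
      ext s
      simp only [Set.mem_setOf_eq, Set.mem_iInter, Set.mem_iUnion, Set.mem_inter_iff,
        nat_infinite_iff, Set.mem_inter_iff, Set.mem_setOf_eq]
      constructor
      · intro h m; obtain ⟨n, ⟨h1, h2⟩, h3⟩ := h m; exact ⟨n, h3, h1, h2⟩
      · intro h m; obtain ⟨n, h3, h1, h2⟩ := h m; exact ⟨n, ⟨h1, h2⟩, h3⟩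
    rw [this]
    refine MeasurableSet.iInter fun m => MeasurableSet.iUnion fun n =>
      MeasurableSet.iUnion fun _ => (hD n).inter ?_
    exact measurableSet_lt ((hξm n).dist measurable_const) measurable_const
  intro j
  induction j with
  | zero =>
    constructor
    · intro n; simp [constraint]
    · exact key _ 0 (by intro n; simp [constraint])
  | succ m ih =>
    have hd : ∀ n, MeasurableSet {s | n ∈ constraint ξ (m+1) s} := by
      intro n
      rw [show {s | n ∈ constraint ξ (m+1) s}
          = {s | n ∈ constraint ξ m s} ∩
            (⋃ k, ({s | center ξ m s = k} ∩ {s | dist (ξ n s) (q N k) < r m})) by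
        ext s
        simp only [constraint_succ, Set.mem_inter_iff, Set.mem_setOf_eq, Set.mem_iUnion]
        constructor
        · rintro ⟨h1, h2⟩; exact ⟨h1, center ξ m s, rfl, h2⟩
        · rintro ⟨h1, k, hk, h2⟩; exact ⟨h1, by rw [hk]; exact h2⟩]
      refine (ih.1 n).inter (MeasurableSet.iUnion fun k => MeasurableSet.inter ?_ ?_)
      · exact ih.2 (measurableSet_singleton k)
      · exact measurableSet_lt ((hξm n).dist measurable_const) measurable_const
    exact ⟨hd, key _ (m+1) hd⟩

end MSCS

end MSCSaux

open MSCS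
/-- A set-valued map `φ` from a measurable space `S` to subsets of `ℝ^N` is measurable if
`{s | φ(s) ∩ A ≠ ∅}` is measurable for every open `A ⊆ ℝ^N`. -/
def IsMeasurableSetValued {S : Type*} [MeasurableSpace S] {N : ℕ}
    (φ : S → Set (Fin N → ℝ)) : Prop :=
  ∀ A : Set (Fin N → ℝ), IsOpen A → MeasurableSet {s | (φ s ∩ A).Nonempty}

/-- Proposition `convergent-subsequence` of the paper: if `φ` is a nonempty compact-valued
measurable set-valued map in `ℝ^N` and `(ξ_n)` is a sequence of measurable selectors of `φ`,
then there exist a measurable selector `ξ₀` of `φ` and measurable functions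
`i_j : S → ℕ`, strictly increasing in `j` with `i_0(s) ≥ 1`, such that
`ξ_{i_j(s)}(s) → ξ₀(s)` for every `s`. -/
theorem measurable_selector_convergent_subsequence
    {S : Type*} [MeasurableSpace S] (N : ℕ)
    (φ : S → Set (Fin N → ℝ)) (hφ : IsMeasurableSetValued φ)
    (hne : ∀ s, (φ s).Nonempty) (hcpt : ∀ s, IsCompact (φ s))
    (ξ : ℕ → S → Fin N → ℝ) (hξm : ∀ n, Measurable (ξ n)) (hξ : ∀ n s, ξ n s ∈ φ s) :
    ∃ (ξ₀ : S → Fin N → ℝ) (i : ℕ → S → ℕ),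
      Measurable ξ₀ ∧ (∀ s, ξ₀ s ∈ φ s) ∧ (∀ j, Measurable (i j)) ∧
      (∀ s, 1 ≤ i 0 s) ∧ (∀ j s, i j s < i (j + 1) s) ∧
      ∀ s, Filter.Tendsto (fun j => ξ (i j s) s) Filter.atTop (nhds (ξ₀ s)) := by
  classical
  -- the centers sequence
  set c : ℕ → S → (Fin N → ℝ) := fun j s => q N (center ξ j s) with hc
  have hinf : ∀ s j, (constraint ξ j s).Infinite :=
    fun s j => (constraint_infinite ξ (hcpt s) (fun n => hξ n s) j).1
  -- Cauchy estimate
  have hest : ∀ s, ∀ j j' : ℕ, j ≤ j' → dist (c j s) (c j' s) ≤ r j + r j' := by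
    intro s j j' hjj
    obtain ⟨n, hn⟩ := (hinf s (j'+1)).nonempty
    have h1 : n ∈ constraint ξ (j+1) s :=
      constraint_antitone ξ (Nat.succ_le_succ hjj) s hn
    have d1 := mem_constraint_dist ξ h1
    have d2 := mem_constraint_dist ξ hn
    calc dist (c j s) (c j' s) ≤ dist (c j s) (ξ n s) + dist (ξ n s) (c j' s) :=
          dist_triangle _ _ _
      _ ≤ r j + r j' := by
          rw [dist_comm (c j s)]
          exact add_le_add d1.le d2.le
  have hcauchy : ∀ s, CauchySeq (fun j => c j s) := by
    intro s
    apply cauchySeq_of_le_geometric (1/2) 2 (by norm_num)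
    intro n
    calc dist (c n s) (c (n+1) s) ≤ r n + r (n+1) := hest s n (n+1) (Nat.le_succ n)
      _ ≤ 2 * (1/2)^n := by
          simp only [r, pow_succ]; nlinarith [pow_pos (by norm_num : (0:ℝ) < 1/2) n]
  set ξ₀ : S → Fin N → ℝ := fun s => limUnder atTop (fun j => c j s) with hξ₀
  have hlim : ∀ s, Tendsto (fun j => c j s) atTop (nhds (ξ₀ s)) :=
    fun s => (hcauchy s).tendsto_limUnder
  -- distance from centers to the limit
  have hdlim : ∀ s j, dist (c j s) (ξ₀ s) ≤ 2 * r j := by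
    intro s j
    have h1 : Tendsto (fun j' => dist (c j s) (c j' s)) atTop (nhds (dist (c j s) (ξ₀ s))) :=
      (tendsto_const_nhds.dist (hlim s))
    have h2 : Tendsto (fun j' : ℕ => r j + r j') atTop (nhds (r j + 0)) := by
      apply tendsto_const_nhds.add
      exact tendsto_pow_atTop_nhds_zero_of_lt_one (by norm_num) (by norm_num)
    have := le_of_tendsto_of_tendsto h1 h2
      (by filter_upwards [eventually_ge_atTop j] with j' hj' using hest s j j' hj')
    have hr := (r_pos j).le
    linarith
  -- ξ₀ s is a cluster point
  have hcluster : ∀ s, ∀ ε > 0, {n | dist (ξ n s) (ξ₀ s) < ε}.Infinite := by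
    intro s ε hε
    obtain ⟨j, hj⟩ := exists_pow_lt_of_lt_one (by linarith : (0:ℝ) < ε/3) (by norm_num : (1:ℝ)/2 < 1)
    apply (hinf s (j+1)).mono
    intro n hn
    have d1 := mem_constraint_dist ξ hn
    have d2 := hdlim s j
    have : dist (ξ n s) (ξ₀ s) ≤ dist (ξ n s) (c j s) + dist (c j s) (ξ₀ s) :=
      dist_triangle _ _ _
    simp only [Set.mem_setOf_eq]
    have hrj : r j < ε/3 := hj
    calc dist (ξ n s) (ξ₀ s) ≤ dist (ξ n s) (c j s) + dist (c j s) (ξ₀ s) := this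
      _ < r j + 2 * r j := by linarith
      _ < ε := by linarith
  -- measurability of ξ₀
  have hcm : ∀ j, Measurable (fun s => c j s) := by
    intro j
    exact measurable_from_nat.comp ((measurable_constraint_center ξ hξm j).2)
  have hξ₀m : Measurable ξ₀ := by
    apply measurable_of_tendsto_metrizable hcm
    rw [tendsto_pi_nhds]
    exact hlim
  -- membership of ξ₀
  have hξ₀mem : ∀ s, ξ₀ s ∈ φ s := by
    intro s
    have : ∀ j : ℕ, ∃ n, dist (ξ n s) (ξ₀ s) < r j :=
      fun j => ((hcluster s (r j) (r_pos j)).nonempty).imp (fun n hn => hn)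
    choose u hu using this
    have htend : Tendsto (fun j => ξ (u j) s) atTop (nhds (ξ₀ s)) := by
      rw [tendsto_iff_dist_tendsto_zero]
      apply squeeze_zero (fun j => dist_nonneg) (fun j => (hu j).le)
      exact tendsto_pow_atTop_nhds_zero_of_lt_one (by norm_num) (by norm_num)
    exact (hcpt s).isClosed.mem_of_tendsto htend
      (Filter.Eventually.of_forall (fun j => hξ (u j) s))
  -- the index functions
  set P : ℝ → (S → ℕ) → ℕ → S → Prop :=
    fun ε m n s => m s < n ∧ dist (ξ n s) (ξ₀ s) < ε with hP
  set step : ℝ → (S → ℕ) → S → ℕ :=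
    fun ε m s => if h : ∃ n, P ε m n s then Nat.find h else 0 with hstep
  have hPex : ∀ (ε : ℝ), 0 < ε → ∀ (m : S → ℕ) s, ∃ n, P ε m n s := by
    intro ε hε m s
    obtain ⟨n, hn, hmn⟩ := (hcluster s ε hε).exists_gt (m s)
    exact ⟨n, hmn, hn⟩
  have hstep_spec : ∀ (ε : ℝ), 0 < ε → ∀ (m : S → ℕ) s,
      m s < step ε m s ∧ dist (ξ (step ε m s) s) (ξ₀ s) < ε := by
    intro ε hε m s
    have h := hPex ε hε m s
    simp only [hstep, dif_pos h]
    exact Nat.find_spec h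
  have hstep_meas : ∀ (ε : ℝ) (m : S → ℕ), Measurable m → Measurable (step ε m) := by
    intro ε m hm
    apply MSCS.measurable_find (P := fun n s => P ε m n s) (f := step ε m)
      (fun k => (measurableSet_lt hm measurable_const).inter
        (measurableSet_lt ((hξm k).dist hξ₀m) measurable_const))
    intro s k
    rw [hstep]
    exact MSCS.dfind_eq_iff k
  set i : ℕ → S → ℕ := fun j => Nat.rec (step 1 (fun _ => 0))
    (fun j' ih => step ((1/2)^(j'+1)) ih) j with hi
  have hi0 : i 0 = step 1 (fun _ => 0) := rfl
  have hisucc : ∀ j, i (j+1) = step ((1/2)^(j+1)) (i j) := fun j => rfl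
  have himeas : ∀ j, Measurable (i j) := by
    intro j
    induction j with
    | zero => exact hstep_meas 1 _ measurable_const
    | succ m ih => exact hstep_meas _ _ ih
  have hidist : ∀ j s, dist (ξ (i j s) s) (ξ₀ s) < (1/2)^j := by
    intro j s
    cases j with
    | zero => rw [hi0]; simpa using (hstep_spec 1 one_pos (fun _ => 0) s).2
    | succ m => exact (hstep_spec ((1/2)^(m+1)) (by positivity) (i m) s).2
  refine ⟨ξ₀, i, hξ₀m, hξ₀mem, himeas, ?_, ?_, ?_⟩
  · intro s
    exact (hstep_spec 1 one_pos (fun _ => 0) s).1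
  · intro j s
    exact (hstep_spec ((1/2)^(j+1)) (by positivity) (i j) s).1
  · intro s
    rw [tendsto_iff_dist_tendsto_zero]
    apply squeeze_zero (fun j => dist_nonneg) (fun j => (hidist j s).le)
    exact tendsto_pow_atTop_nhds_zero_of_lt_one (by norm_num) (by norm_num)
end

section
/- Let (Ω′,𝒜,μ) be a probability space and X : Ω′ → ℝ^{N₁} a random vector whose coordinates are μ-a.s. strictly positive. Define D = {α ∈ ℝ^{N₁} : ⟨α,X⟩ ≥ 0 μ-a.s.}, the linear subspace L = {α ∈ ℝ^{N₁} : ⟨e,α⟩ = 0 and ⟨α,X⟩ = 0 μ-a.s.}, and the arbitrage set U = {u ∈ ℝ^{N₁} : ⟨e,u⟩ = 0, ⟨u,X⟩ ≥ 0 μ-a.s., and μ(⟨u,X⟩ > 0) > 0}. Let A ⊆ ℝ^{N₁} be a closed convex set such that: A ⊆ D; ⟨e,α⟩ ∈ [0,1] for all α ∈ A; λα ∈ A for all α ∈ A and λ ∈ [0, 1/⟨e,α⟩] (with λ ∈ [0,∞) if ⟨e,α⟩ = 0); and A^p ⊆ A, where A^p = {α ∈ L^⊥ : ∃ u ∈ L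 with α + u ∈ A} is the orthogonal projection of A onto L^⊥. Then A^p is compact if and only if there is no u ∈ U with λu ∈ A for every λ > 0. -/
open MeasureTheory
open scoped BigOperators

/-- Scalar product on `ℝ^{N}`. -/
def dotp {N : ℕ} (x y : Fin N → ℝ) : ℝ := ∑ n, x n * y n

/-- `D`: portfolios of exogenous assets with `μ`-a.s. nonnegative value next period. -/
def Dset {N₁ : ℕ} {Ω : Type*} [MeasurableSpace Ω] (μ : Measure Ω)
    (X : Ω → Fin N₁ → ℝ) : Set (Fin N₁ → ℝ) :=
  {α | ∀ᵐ ω ∂μ, 0 ≤ dotp α (X ω)}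

/-- `L`: the linear space of null investments (`⟨e,α⟩ = 0` and `⟨α,X⟩ = 0` a.s.). -/
def Lset {N₁ : ℕ} {Ω : Type*} [MeasurableSpace Ω] (μ : Measure Ω)
    (X : Ω → Fin N₁ → ℝ) : Set (Fin N₁ → ℝ) :=
  {α | (∑ n, α n) = 0 ∧ ∀ᵐ ω ∂μ, dotp α (X ω) = 0}

/-- `U`: the cone of arbitrage opportunities in the exogenous assets. -/
def Uset {N₁ : ℕ} {Ω : Type*} [MeasurableSpace Ω] (μ : Measure Ω)
    (X : Ω → Fin N₁ → ℝ) : Set (Fin N₁ → ℝ) :=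
  {u | (∑ n, u n) = 0 ∧ (∀ᵐ ω ∂μ, 0 ≤ dotp u (X ω)) ∧ 0 < μ {ω | 0 < dotp u (X ω)}}

/-- `A^p`: the orthogonal projection of `A` on `L^⊥`, described as
`{α ∈ L^⊥ : ∃ u ∈ L, α + u ∈ A}`. -/
def Aproj {N₁ : ℕ} {Ω : Type*} [MeasurableSpace Ω] (μ : Measure Ω)
    (X : Ω → Fin N₁ → ℝ) (A : Set (Fin N₁ → ℝ)) : Set (Fin N₁ → ℝ) :=
  {α | (∀ u ∈ Lset μ X, dotp α u = 0) ∧ ∃ u ∈ Lset μ X, α + u ∈ A}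

/- ---------- auxiliary lemmas ---------- -/

lemma dotp_add_left {N : ℕ} (x y z : Fin N → ℝ) :
    dotp (x + y) z = dotp x z + dotp y z := by
  simp [dotp, add_mul, Finset.sum_add_distrib]

lemma dotp_smul_left {N : ℕ} (c : ℝ) (x y : Fin N → ℝ) :
    dotp (c • x) y = c * dotp x y := by
  simp [dotp, Finset.mul_sum, mul_assoc]

lemma dotp_zero_left {N : ℕ} (y : Fin N → ℝ) : dotp 0 y = 0 := by
  simp [dotp]

lemma eq_zero_of_dotp_self {N : ℕ} (x : Fin N → ℝ) (h : dotp x x = 0) : x = 0 := by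
  have h' : ∀ n ∈ Finset.univ, x n * x n = 0 :=
    (Finset.sum_eq_zero_iff_of_nonneg (fun n _ => mul_self_nonneg (x n))).mp h
  funext n
  simpa [mul_self_eq_zero] using h' n (Finset.mem_univ n)

lemma Lset_zero {N₁ : ℕ} {Ω : Type*} [MeasurableSpace Ω] (μ : Measure Ω)
    (X : Ω → Fin N₁ → ℝ) : (0 : Fin N₁ → ℝ) ∈ Lset μ X := by
  refine ⟨by simp, ?_⟩
  filter_upwards with ω
  simp [dotp]

lemma Lset_add {N₁ : ℕ} {Ω : Type*} [MeasurableSpace Ω] {μ : Measure Ω}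
    {X : Ω → Fin N₁ → ℝ} {a b : Fin N₁ → ℝ} (ha : a ∈ Lset μ X) (hb : b ∈ Lset μ X) :
    a + b ∈ Lset μ X := by
  refine ⟨?_, ?_⟩
  · simp only [Pi.add_apply]
    rw [Finset.sum_add_distrib, ha.1, hb.1, add_zero]
  · filter_upwards [ha.2, hb.2] with ω h1 h2
    rw [dotp_add_left, h1, h2, add_zero]

lemma Lset_smul {N₁ : ℕ} {Ω : Type*} [MeasurableSpace Ω] {μ : Measure Ω}
    {X : Ω → Fin N₁ → ℝ} (c : ℝ) {a : Fin N₁ → ℝ} (ha : a ∈ Lset μ X) :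
    c • a ∈ Lset μ X := by
  refine ⟨?_, ?_⟩
  · have : ∑ n, (c • a) n = c * ∑ n, a n := by
      simp [Finset.mul_sum]
    rw [this, ha.1, mul_zero]
  · filter_upwards [ha.2] with ω h1
    rw [dotp_smul_left, h1, mul_zero]

/-- Proposition 1 of the paper (`prop-na`), stated pointwise for a fixed conditional
distribution `μ` of the return vector `X`: under assumptions (A.1) and (A.3) on the
constraint set `A`, compactness of `A^p` (assumption (A.4)) is equivalent to the absence
of unbounded arbitrage opportunities (assumption (A.5)). -/
theorem Aproj_compact_iff_no_unbounded_arbitrage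
    {N₁ : ℕ} {Ω : Type*} [MeasurableSpace Ω] (μ : Measure Ω) [IsProbabilityMeasure μ]
    (X : Ω → Fin N₁ → ℝ) (hXm : Measurable X) (hX : ∀ᵐ ω ∂μ, ∀ n, 0 < X ω n)
    (A : Set (Fin N₁ → ℝ)) (hAc : IsClosed A) (hAconv : Convex ℝ A)
    (hAD : A ⊆ Dset μ X)
    (hAsum : ∀ α ∈ A, 0 ≤ ∑ n, α n ∧ ∑ n, α n ≤ 1)
    (hAcone : ∀ α ∈ A, ∀ lam : ℝ, 0 ≤ lam → lam * ∑ n, α n ≤ 1 → lam • α ∈ A)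
    (hApA : Aproj μ X A ⊆ A) :
    IsCompact (Aproj μ X A) ↔
      ¬∃ u ∈ Uset μ X, ∀ lam : ℝ, 0 < lam → lam • u ∈ A := by
  classical
  -- The set of vectors orthogonal to `L`.
  set C : Set (Fin N₁ → ℝ) := {α | ∀ z ∈ Lset μ X, dotp α z = 0} with hCdef
  have hAeq : Aproj μ X A = A ∩ C := by
    ext α
    constructor
    · intro hα
      exact ⟨hApA hα, hα.1⟩
    · rintro ⟨hA, hc⟩
      exact ⟨hc, 0, Lset_zero μ X, by simpa using hA⟩
  constructor
  · -- compact → no unbounded arbitrage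
    intro hcomp
    rintro ⟨u, ⟨husum, huge, hupos⟩, hray⟩
    -- set up `L` as a submodule of Euclidean space and project `u` on `L^⊥`
    let E := EuclideanSpace ℝ (Fin N₁)
    let Lsub : Submodule ℝ E :=
      { carrier := {x : E | WithLp.ofLp x ∈ Lset μ X}
        add_mem' := fun ha hb => Lset_add ha hb
        zero_mem' := Lset_zero μ X
        smul_mem' := fun c _ ha => Lset_smul c ha }
    let p : Fin N₁ → ℝ := WithLp.ofLp (Lsub.orthogonalProjectionOnto (WithLp.toLp 2 u) : E)
    have hpL : p ∈ Lset μ X := (Lsub.orthogonalProjectionOnto (WithLp.toLp 2 u)).2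
    set w : Fin N₁ → ℝ := u - p with hwdef
    have hwperp : ∀ z ∈ Lset μ X, dotp w z = 0 := by
      intro z hz
      have hw : WithLp.toLp 2 w ∈ Lsubᗮ := Lsub.sub_starProjection_mem_orthogonal (WithLp.toLp 2 u)
      have h1 : (inner ℝ (WithLp.toLp 2 z : E) (WithLp.toLp 2 w) : ℝ) = 0 :=
        (Submodule.mem_orthogonal _ _).mp hw (WithLp.toLp 2 z) hz
      have h2 : ∑ i, z i * w i = 0 := by
        simpa [PiLp.inner_apply, RCLike.inner_apply, mul_comm] using h1
      simpa [dotp, mul_comm] using h2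
    have hwne : w ≠ 0 := by
      intro h
      have hup : u = p := by
        have := sub_eq_zero.mp h
        exact this
      have h2 : ∀ᵐ ω ∂μ, dotp u (X ω) = 0 := by rw [hup]; exact hpL.2
      rw [ae_iff] at h2
      have hsub : {ω | 0 < dotp u (X ω)} ⊆ {ω | ¬dotp u (X ω) = 0} := by
        intro ω hω
        exact fun he => by simp [he] at hω
      exact hupos.ne' (measure_mono_null hsub h2)
    have hmem : ∀ lam : ℝ, 0 < lam → lam • w ∈ Aproj μ X A := by
      intro lam hlam
      refine ⟨fun z hz => by rw [dotp_smul_left, hwperp z hz, mul_zero], lam • p,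
        Lset_smul lam hpL, ?_⟩
      have heq : lam • w + lam • p = lam • u := by
        rw [← smul_add, hwdef, sub_add_cancel]
      rw [heq]
      exact hray lam hlam
    -- contradiction with boundedness
    obtain ⟨Cb, hCb⟩ := isBounded_iff_forall_norm_le.mp hcomp.isBounded
    have hwpos : 0 < ‖w‖ := norm_pos_iff.mpr hwne
    have hCbpos : 0 < Cb + 1 := by
      have := hCb _ (hmem 1 one_pos)
      rw [one_smul] at this
      linarith
    have hbig := hCb _ (hmem ((Cb + 1) / ‖w‖) (by positivity))
    rw [norm_smul, Real.norm_eq_abs, abs_of_pos (by positivity),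
      div_mul_cancel₀ _ (ne_of_gt hwpos)] at hbig
    linarith
  · -- no unbounded arbitrage → compact
    intro hno
    have hCclosed : IsClosed C := by
      have : C = ⋂ z ∈ Lset μ X, {α : Fin N₁ → ℝ | dotp α z = 0} := by
        ext α; simp [hCdef]
      rw [this]
      refine isClosed_biInter fun z _ => isClosed_eq ?_ continuous_const
      exact continuous_finset_sum _ fun n _ => (continuous_apply n).mul continuous_const
    have hCconv : Convex ℝ C := by
      intro x hx y hy a b ha hb hab z hz
      rw [dotp_add_left, dotp_smul_left, dotp_smul_left, hx z hz, hy z hz]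
      ring
    have hclosed : IsClosed (Aproj μ X A) := hAeq ▸ hAc.inter hCclosed
    have hconvA : Convex ℝ (Aproj μ X A) := hAeq ▸ hAconv.inter hCconv
    refine Metric.isCompact_of_isClosed_isBounded hclosed ?_
    by_contra hub
    have hex : ∀ k : ℕ, ∃ α ∈ Aproj μ X A, (k : ℝ) < ‖α‖ := by
      intro k
      by_contra h
      push_neg at h
      exact hub (isBounded_iff_forall_norm_le.mpr ⟨k, h⟩)
    choose α hαmem hαnorm using hex
    have hnormpos : ∀ k, 0 < ‖α k‖ := fun k =>
      lt_of_le_of_lt (Nat.cast_nonneg k) (hαnorm k)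
    have h0A : (0 : Fin N₁ → ℝ) ∈ A := by
      have := hAcone (α 0) (hApA (hαmem 0)) 0 le_rfl (by simp)
      simpa using this
    have h0proj : (0 : Fin N₁ → ℝ) ∈ Aproj μ X A := by
      rw [hAeq]
      exact ⟨h0A, fun z _ => dotp_zero_left z⟩
    set β : ℕ → (Fin N₁ → ℝ) := fun k => ‖α k‖⁻¹ • α k with hβdef
    have hβsph : ∀ k, β k ∈ Metric.sphere (0 : Fin N₁ → ℝ) 1 := by
      intro k
      rw [mem_sphere_zero_iff_norm, hβdef]
      rw [norm_smul, Real.norm_eq_abs, abs_of_pos (inv_pos.mpr (hnormpos k)),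
        inv_mul_cancel₀ (ne_of_gt (hnormpos k))]
    obtain ⟨u, hu_sph, φ, hφ, hlim⟩ :=
      (isCompact_sphere (0 : Fin N₁ → ℝ) 1).tendsto_subseq hβsph
    have hune : ‖u‖ = 1 := mem_sphere_zero_iff_norm.mp hu_sph
    have hrayP : ∀ lam : ℝ, 0 < lam → lam • u ∈ Aproj μ X A := by
      intro lam hlam
      have htend : Filter.Tendsto (fun k => lam • (β ∘ φ) k) Filter.atTop (nhds (lam • u)) :=
        hlim.const_smul lam
      refine hclosed.mem_of_tendsto htend ?_
      filter_upwards [Filter.eventually_ge_atTop ⌈lam⌉₊] with k hk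
      have hk1 : (k : ℝ) ≤ (φ k : ℝ) := Nat.cast_le.mpr hφ.le_apply
      have hk2 : lam ≤ (⌈lam⌉₊ : ℝ) := Nat.le_ceil lam
      have hk3 : ((⌈lam⌉₊ : ℕ) : ℝ) ≤ (k : ℝ) := Nat.cast_le.mpr hk
      have hk' : lam ≤ ‖α (φ k)‖ := by
        have := hαnorm (φ k)
        linarith
      set t : ℝ := lam * ‖α (φ k)‖⁻¹ with htdef
      have ht0 : 0 ≤ t := by positivity
      have ht1 : t ≤ 1 := by
        rw [htdef, ← div_eq_mul_inv]
        exact div_le_one_of_le₀ hk' (norm_nonneg _)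
      have hcc := hconvA h0proj (hαmem (φ k)) (by linarith : (0:ℝ) ≤ 1 - t) ht0 (by ring)
      have heq : (1 - t) • (0 : Fin N₁ → ℝ) + t • α (φ k) = lam • (β ∘ φ) k := by
        simp [hβdef, smul_smul, htdef, Function.comp]
      rw [heq] at hcc
      exact hcc
    have huA : ∀ lam : ℝ, 0 < lam → lam • u ∈ A := fun lam h => hApA (hrayP lam h)
    have hscale : ∀ lam : ℝ, 0 < lam → 0 ≤ lam * ∑ n, u n ∧ lam * ∑ n, u n ≤ 1 := by
      intro lam h
      have h2 := hAsum _ (huA lam h)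
      have h3 : ∑ n, (lam • u) n = lam * ∑ n, u n := by
        simp [Finset.mul_sum]
      rw [h3] at h2
      exact h2
    have hsum : ∑ n, u n = 0 := by
      have h1 : 0 ≤ ∑ n, u n := by simpa using (hscale 1 one_pos).1
      rcases lt_or_eq_of_le h1 with h2 | h2
      · exfalso
        have h3 := (hscale (2 / ∑ n, u n) (by positivity)).2
        rw [div_mul_cancel₀ _ (ne_of_gt h2)] at h3
        linarith
      · exact h2.symm
    have hge : ∀ᵐ ω ∂μ, 0 ≤ dotp u (X ω) := by
      have := hAD (by simpa using huA 1 one_pos)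
      exact this
    have hpos : 0 < μ {ω | 0 < dotp u (X ω)} := by
      rw [pos_iff_ne_zero]
      intro hz
      have hle : ∀ᵐ ω ∂μ, dotp u (X ω) ≤ 0 := by
        rw [ae_iff]
        have : {ω | ¬dotp u (X ω) ≤ 0} = {ω | 0 < dotp u (X ω)} := by
          ext ω; simp [not_le]
        rw [this]
        exact hz
      have heq : ∀ᵐ ω ∂μ, dotp u (X ω) = 0 := by
        filter_upwards [hge, hle] with ω ha hb
        linarith
      have huL : u ∈ Lset μ X := ⟨hsum, heq⟩
      have hself : dotp u u = 0 := by
        have h5 := hrayP 1 one_pos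
        rw [one_smul] at h5
        exact h5.1 u huL
      have : u = 0 := eq_zero_of_dotp_self u hself
      rw [this] at hune
      simp at hune
    exact hno ⟨u, ⟨hsum, hge, hpos⟩, huA⟩
end

section
/- In the one-period market setting, let A ⊆ ℝ^{N₁} be an admissible constraint set with A^p compact, and suppose there exists α̃ ∈ A with μ(⟨α̃,X⟩W + |Y| > 0) = 1. For each positive integer i let g_i(x) = 1/i + i·arctan(x/i) and let α̂_i ∈ A^p be a maximizer over A^p of α ↦ E_μ[ln g_i(⟨α,X⟩W + |Y|)] − ⟨e,α⟩. Suppose α̂ ∈ A^p and there is a strictly increasing sequence of positive integers (i_j) with α̂_{i_j} → α̂. Then: (i) μ(⟨α̂,X⟩W + |Y| > 0) = 1; (ii) for every α ∈ A, E_μ[⟨α̂−α, X⟩W / (⟨α̂,X⟩W + |Y|)] ≥ ⟨e, α̂−α⟩; and (iii) E_μ[⟨α̂,X⟩W / (⟨α̂,X⟩W + |Y|)] = ⟨e,α̂⟩. -/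
open MeasureTheory
open scoped BigOperators

/-- The truncation functions `g_i(x) = 1/i + i·arctan(x/i)`. -/
noncomputable def gfun (i : ℕ) (x : ℝ) : ℝ := 1 / i + i * Real.arctan (x / i)


open Filter Real
open scoped Topology ENNReal


lemma my_arctan_le_self {u : ℝ} (hu : 0 ≤ u) : Real.arctan u ≤ u := by
  have hmono : Monotone (fun u : ℝ => u - Real.arctan u) := by
    apply monotone_of_deriv_nonneg
    · exact differentiable_id.sub Real.differentiable_arctan
    · intro x
      have h : HasDerivAt (fun u : ℝ => u - Real.arctan u) (1 - 1 / (1 + x ^ 2)) x :=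
        (hasDerivAt_id x).sub (Real.hasDerivAt_arctan x)
      rw [h.deriv]
      have h1 : (0:ℝ) < 1 + x ^ 2 := by positivity
      have : 1 / (1 + x ^ 2) ≤ 1 := by
        rw [div_le_one h1]; nlinarith
      linarith
  have := hmono hu
  simpa [Real.arctan_zero] using this

lemma my_self_div_le_arctan {u : ℝ} (hu : 0 ≤ u) : u / (1 + u ^ 2) ≤ Real.arctan u := by
  have hmono : Monotone (fun u : ℝ => Real.arctan u - u / (1 + u ^ 2)) := by
    apply monotone_of_deriv_nonneg
    · apply Real.differentiable_arctan.sub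
      apply Differentiable.div differentiable_id
      · exact (differentiable_const 1).add (differentiable_id.pow 2)
      · intro x; positivity
    · intro x
      have h1 : (0:ℝ) < 1 + x ^ 2 := by positivity
      have hd : HasDerivAt (fun u : ℝ => u / (1 + u ^ 2))
          ((1 * (1 + x ^ 2) - x * (2 * x)) / (1 + x ^ 2) ^ 2) x := by
        have := (hasDerivAt_id x).div
          (((hasDerivAt_id x).pow 2).const_add 1) (ne_of_gt h1)
        simpa [Pi.div_def] using this
      have h : HasDerivAt (fun u : ℝ => Real.arctan u - u / (1 + u ^ 2))
          (1 / (1 + x ^ 2) - (1 * (1 + x ^ 2) - x * (2 * x)) / (1 + x ^ 2) ^ 2) x :=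
        (Real.hasDerivAt_arctan x).sub hd
      rw [h.deriv]
      rw [div_sub_div _ _ (ne_of_gt h1) (by positivity : ((1 + x ^ 2) ^ 2 : ℝ) ≠ 0)]
      apply div_nonneg _ (by positivity)
      nlinarith
  have := hmono hu
  simpa [Real.arctan_zero] using this

lemma arctan_nonneg' {u : ℝ} (hu : 0 ≤ u) : 0 ≤ Real.arctan u := by
  have := Real.arctan_strictMono.monotone hu
  simpa [Real.arctan_zero] using this

noncomputable def gfunR (c x : ℝ) : ℝ := 1 / c + c * Real.arctan (x / c)
noncomputable def psifun (c x : ℝ) : ℝ := (1 + (x / c) ^ 2)⁻¹ / gfunR c x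
lemma gfunR_pos {c x : ℝ} (hc : 0 < c) (hx : 0 ≤ x) : 0 < gfunR c x := by
  have h1 : 0 ≤ Real.arctan (x / c) := arctan_nonneg' (by positivity)
  have : 0 < 1 / c := by positivity
  have h2 : 0 ≤ c * Real.arctan (x / c) := by positivity
  unfold gfunR; linarith

lemma gfunR_mono {c x y : ℝ} (hc : 0 < c) (hxy : x ≤ y) : gfunR c x ≤ gfunR c y := by
  unfold gfunR
  have := Real.arctan_strictMono.monotone (div_le_div_of_nonneg_right hxy hc.le : x / c ≤ y / c)
  nlinarith

lemma gfunR_le {c x : ℝ} (hc : 0 < c) (hx : 0 ≤ x) : gfunR c x ≤ 1 / c + x := by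
  unfold gfunR
  have := my_arctan_le_self (by positivity : (0:ℝ) ≤ x / c)
  have h2 : c * Real.arctan (x / c) ≤ c * (x / c) := by nlinarith
  have : c * (x / c) = x := by field_simp
  linarith

lemma gfunR_ge {c x : ℝ} (hc : 0 < c) (hx : 0 ≤ x) :
    x * (1 + (x / c) ^ 2)⁻¹ ≤ gfunR c x := by
  unfold gfunR
  have h1 := my_self_div_le_arctan (by positivity : (0:ℝ) ≤ x / c)
  have h2 : c * ((x / c) / (1 + (x / c) ^ 2)) ≤ c * Real.arctan (x / c) := by nlinarith
  have h3 : c * ((x / c) / (1 + (x / c) ^ 2)) = x * (1 + (x / c) ^ 2)⁻¹ := by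
    field_simp
  have : 0 < 1 / c := by positivity
  linarith

lemma gfunR_le_3c {c x : ℝ} (hc : 1 ≤ c) (hx : 0 ≤ x) : gfunR c x ≤ 3 * c := by
  have hc0 : 0 < c := lt_of_lt_of_le zero_lt_one hc
  have h1 : 1 / c ≤ c := by
    rw [div_le_iff₀ hc0]; nlinarith
  have h2 : Real.arctan (x / c) ≤ 2 := le_trans (Real.arctan_lt_pi_div_two _).le
    (by linarith [Real.pi_le_four])
  unfold gfunR; nlinarith

lemma abs_log_gfunR_le {c x : ℝ} (hc : 1 ≤ c) (hx : 0 ≤ x) :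
    |Real.log (gfunR c x)| ≤ Real.log (3 * c) := by
  have hc0 : 0 < c := lt_of_lt_of_le zero_lt_one hc
  have hg := gfunR_pos hc0 hx
  rw [abs_le]
  constructor
  · have h1 : 1 / (3 * c) ≤ gfunR c x := by
      have : 1 / (3 * c) ≤ 1 / c := by
        apply one_div_le_one_div_of_le hc0; linarith
      have h2 : 0 ≤ c * Real.arctan (x / c) :=
        mul_nonneg hc0.le (arctan_nonneg' (by positivity))
      unfold gfunR; linarith
    have := Real.log_le_log (by positivity) h1
    rw [Real.log_div one_ne_zero (by positivity)] at this
    simpa using this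
  · exact Real.log_le_log hg (gfunR_le_3c hc hx)

lemma psifun_nonneg {c x : ℝ} (hc : 0 < c) (hx : 0 ≤ x) : 0 ≤ psifun c x := by
  unfold psifun
  apply div_nonneg (by positivity) (gfunR_pos hc hx).le

lemma psifun_mul_le_one {c x : ℝ} (hc : 0 < c) (hx : 0 ≤ x) : psifun c x * x ≤ 1 := by
  unfold psifun
  rw [div_mul_eq_mul_div, div_le_one (gfunR_pos hc hx)]
  calc (1 + (x / c) ^ 2)⁻¹ * x = x * (1 + (x / c) ^ 2)⁻¹ := by ring
  _ ≤ gfunR c x := gfunR_ge hc hx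

lemma psifun_antitone {c x y : ℝ} (hc : 0 < c) (hx : 0 ≤ x) (hxy : x ≤ y) :
    psifun c y ≤ psifun c x := by
  unfold psifun
  apply div_le_div₀ (by positivity) _ (gfunR_pos hc hx) (gfunR_mono hc hxy)
  apply inv_anti₀ (by positivity)
  have : (x / c) ^ 2 ≤ (y / c) ^ 2 := by
    apply pow_le_pow_left₀ (by positivity) (div_le_div_of_nonneg_right hxy hc.le)
  linarith

lemma hasDerivAt_log_gfunR {c x : ℝ} (hc : 0 < c) (hx : 0 ≤ x) :
    HasDerivAt (fun y => Real.log (gfunR c y)) (psifun c x) x := by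
  have h1 : HasDerivAt (fun y : ℝ => y / c) (1 / c) x := by
    simpa using (hasDerivAt_id x).div_const c
  have h2 : HasDerivAt (fun y : ℝ => Real.arctan (y / c))
      (1 / (1 + (x / c) ^ 2) * (1 / c)) x := h1.arctan
  have h3 : HasDerivAt (fun y : ℝ => gfunR c y)
      (c * (1 / (1 + (x / c) ^ 2) * (1 / c))) x := by
    unfold gfunR
    exact (h2.const_mul c).const_add (1 / c)
  have h4 := h3.log (ne_of_gt (gfunR_pos hc hx))
  have : c * (1 / (1 + (x / c) ^ 2) * (1 / c)) = (1 + (x / c) ^ 2)⁻¹ := by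
    field_simp
  rw [this] at h4
  exact h4

lemma tangent_line {c x y : ℝ} (hc : 0 < c) (hx : 0 ≤ x) (hy : 0 ≤ y) :
    Real.log (gfunR c y) ≤ Real.log (gfunR c x) + psifun c x * (y - x) := by
  rcases lt_trichotomy x y with h | h | h
  · obtain ⟨z, hz, hslope⟩ := exists_hasDerivAt_eq_slope (fun w => Real.log (gfunR c w))
      (fun w => psifun c w) h
      (fun w hw => (hasDerivAt_log_gfunR hc (le_trans hx hw.1)).continuousAt.continuousWithinAt)
      (fun w hw => hasDerivAt_log_gfunR hc (le_trans hx hw.1.le))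
    have hzx : psifun c z ≤ psifun c x := psifun_antitone hc hx hz.1.le
    have hyx : (0:ℝ) < y - x := by linarith
    rw [eq_div_iff (ne_of_gt hyx)] at hslope
    nlinarith
  · simp [h]
  · obtain ⟨z, hz, hslope⟩ := exists_hasDerivAt_eq_slope (fun w => Real.log (gfunR c w))
      (fun w => psifun c w) h
      (fun w hw => (hasDerivAt_log_gfunR hc (le_trans hy hw.1)).continuousAt.continuousWithinAt)
      (fun w hw => hasDerivAt_log_gfunR hc (le_trans hy hw.1.le))
    have hzx : psifun c x ≤ psifun c z := psifun_antitone hc (le_trans hy hz.1.le) hz.2.le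
    have hyx : (0:ℝ) < x - y := by linarith
    rw [eq_div_iff (ne_of_gt hyx)] at hslope
    nlinarith [psifun_nonneg hc hx]
lemma slope_mono {c x0 x1 s t : ℝ} (hc : 0 < c) (h0 : 0 ≤ x0) (h1 : 0 ≤ x1)
    (hs : 0 < s) (hst : s ≤ t) (ht : t ≤ 1) :
    (Real.log (gfunR c ((1-t)*x0 + t*x1)) - Real.log (gfunR c x0)) / t ≤
    (Real.log (gfunR c ((1-s)*x0 + s*x1)) - Real.log (gfunR c x0)) / s := by
  have hst1 : s ≤ 1 := le_trans hst ht
  have hm : 0 ≤ (1-s)*x0 + s*x1 := by nlinarith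
  have hxt : 0 ≤ (1-t)*x0 + t*x1 := by nlinarith
  have T0 := tangent_line hc hm h0
  have Tt := tangent_line hc hm hxt
  rw [div_le_div_iff₀ (by linarith) hs]
  nlinarith [mul_le_mul_of_nonneg_left T0 (sub_nonneg.2 hst),
    mul_le_mul_of_nonneg_left Tt hs.le]

lemma tendsto_psifun_pos {c x : ℕ → ℝ} {v : ℝ} (hc : Tendsto c atTop atTop)
    (hx : Tendsto x atTop (𝓝 v)) (hv : 0 < v) :
    Tendsto (fun j => psifun (c j) (x j)) atTop (𝓝 (1/v)) := by
  have hinv : Tendsto (fun j => (c j)⁻¹) atTop (𝓝 0) := hc.inv_tendsto_atTop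
  have hu : Tendsto (fun j => x j / c j) atTop (𝓝 0) := by
    have := hx.mul hinv
    simpa [div_eq_mul_inv] using this
  have hnum : Tendsto (fun j => (1 + (x j / c j) ^ 2)⁻¹) atTop (𝓝 1) := by
    have h2 : Tendsto (fun j => 1 + (x j / c j) ^ 2) atTop (𝓝 (1 + 0 ^ 2)) :=
      tendsto_const_nhds.add (hu.pow 2)
    have := h2.inv₀ (by norm_num)
    simpa using this
  have hcpos : ∀ᶠ j in atTop, 0 < c j := hc.eventually_gt_atTop 0
  have hxpos : ∀ᶠ j in atTop, 0 ≤ x j := hx.eventually (eventually_ge_nhds hv)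
  have hlow : Tendsto (fun j => x j * (1 + (x j / c j) ^ 2)⁻¹) atTop (𝓝 v) := by
    have := hx.mul hnum
    simpa using this
  have harct : Tendsto (fun j => c j * Real.arctan (x j / c j)) atTop (𝓝 v) := by
    apply tendsto_of_tendsto_of_tendsto_of_le_of_le' hlow hx
    · filter_upwards [hcpos, hxpos] with j hcj hxj
      have h1 := my_self_div_le_arctan (by positivity : (0:ℝ) ≤ x j / c j)
      have h2 : c j * ((x j / c j) / (1 + (x j / c j) ^ 2)) ≤
          c j * Real.arctan (x j / c j) := by nlinarith
      have h3 : c j * ((x j / c j) / (1 + (x j / c j) ^ 2)) =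
          x j * (1 + (x j / c j) ^ 2)⁻¹ := by field_simp
      linarith
    · filter_upwards [hcpos, hxpos] with j hcj hxj
      have h1 := my_arctan_le_self (by positivity : (0:ℝ) ≤ x j / c j)
      have h2 : c j * Real.arctan (x j / c j) ≤ c j * (x j / c j) := by nlinarith
      have h3 : c j * (x j / c j) = x j := by field_simp
      linarith
  have hden : Tendsto (fun j => gfunR (c j) (x j)) atTop (𝓝 v) := by
    unfold gfunR
    have h1 : Tendsto (fun j => 1 / c j) atTop (𝓝 0) := by
      simpa [one_div] using hinv
    have := h1.add harct
    simpa using this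
  have := hnum.div hden (ne_of_gt hv)
  simpa [psifun, one_div, Pi.div_def] using this

lemma tendsto_psifun_atTop {c x : ℕ → ℝ} (hc : Tendsto c atTop atTop)
    (hx : Tendsto x atTop (𝓝 0)) (hx0 : ∀ᶠ j in atTop, 0 ≤ x j) :
    Tendsto (fun j => psifun (c j) (x j)) atTop atTop := by
  have hinv : Tendsto (fun j => (c j)⁻¹) atTop (𝓝 0) := hc.inv_tendsto_atTop
  have hu : Tendsto (fun j => x j / c j) atTop (𝓝 0) := by
    have := hx.mul hinv
    simpa [div_eq_mul_inv] using this
  have hnum : Tendsto (fun j => (1 + (x j / c j) ^ 2)⁻¹) atTop (𝓝 1) := by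
    have h2 : Tendsto (fun j => 1 + (x j / c j) ^ 2) atTop (𝓝 (1 + 0 ^ 2)) :=
      tendsto_const_nhds.add (hu.pow 2)
    have := h2.inv₀ (by norm_num)
    simpa using this
  have hcpos : ∀ᶠ j in atTop, 0 < c j := hc.eventually_gt_atTop 0
  have hgpos : ∀ᶠ j in atTop, 0 < gfunR (c j) (x j) := by
    filter_upwards [hcpos, hx0] with j h1 h2 using gfunR_pos h1 h2
  have hupper : Tendsto (fun j => 1 / c j + x j) atTop (𝓝 0) := by
    have h1 : Tendsto (fun j => 1 / c j) atTop (𝓝 0) := by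
      simpa [one_div] using hinv
    simpa using h1.add hx
  have hden : Tendsto (fun j => gfunR (c j) (x j)) atTop (𝓝 0) := by
    apply tendsto_of_tendsto_of_tendsto_of_le_of_le' tendsto_const_nhds hupper
    · filter_upwards [hgpos] with j h using h.le
    · filter_upwards [hcpos, hx0] with j h1 h2 using gfunR_le h1 h2
  have hdenW : Tendsto (fun j => gfunR (c j) (x j)) atTop (𝓝[>] (0:ℝ)) :=
    tendsto_nhdsWithin_of_tendsto_nhds_of_eventually_within _ hden hgpos
  have hinvden : Tendsto (fun j => (gfunR (c j) (x j))⁻¹) atTop atTop :=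
    tendsto_inv_nhdsGT_zero.comp hdenW
  have := Filter.Tendsto.pos_mul_atTop zero_lt_one hnum hinvden
  simpa [psifun, div_eq_mul_inv] using this
lemma dotp_add {N : ℕ} (u v x : Fin N → ℝ) : dotp (u + v) x = dotp u x + dotp v x := by
  unfold dotp
  rw [← Finset.sum_add_distrib]
  congr 1; ext n; simp [add_mul]

lemma dotp_smul {N : ℕ} (c : ℝ) (u x : Fin N → ℝ) : dotp (c • u) x = c * dotp u x := by
  unfold dotp
  rw [Finset.mul_sum]
  congr 1; ext n; simp [mul_assoc]

lemma dotp_comm {N : ℕ} (u x : Fin N → ℝ) : dotp u x = dotp x u := by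
  unfold dotp; congr 1; ext n; ring

lemma dotp_zero {N : ℕ} (x : Fin N → ℝ) : dotp (0 : Fin N → ℝ) x = 0 := by
  simp [dotp]

lemma exists_proj {N₁ : ℕ} {Ω : Type*} [MeasurableSpace Ω] (μ : Measure Ω)
    (X : Ω → Fin N₁ → ℝ) (A : Set (Fin N₁ → ℝ)) {α : Fin N₁ → ℝ} (hα : α ∈ A) :
    ∃ α' ∈ Aproj μ X A, (∑ n, α' n) = (∑ n, α n) ∧
      (∀ᵐ ω ∂μ, dotp α' (X ω) = dotp α (X ω)) := by
  classical
  let K : Submodule ℝ (EuclideanSpace ℝ (Fin N₁)) :=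
    { carrier := WithLp.ofLp ⁻¹' Lset μ X
      add_mem' := by
        rintro u v ⟨hu1, hu2⟩ ⟨hv1, hv2⟩
        constructor
        · show (∑ n, (u n + v n)) = 0
          rw [Finset.sum_add_distrib, hu1, hv1, add_zero]
        · filter_upwards [hu2, hv2] with ω h1 h2
          show dotp (u.ofLp + v.ofLp) (X ω) = 0
          rw [dotp_add, h1, h2, add_zero]
      zero_mem' := by
        constructor
        · show (∑ n, (0:ℝ)) = 0
          simp
        · filter_upwards with ω
          exact dotp_zero (X ω)
      smul_mem' := by
        rintro c u ⟨hu1, hu2⟩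
        constructor
        · show (∑ n, c * u n) = 0
          rw [← Finset.mul_sum, hu1, mul_zero]
        · filter_upwards [hu2] with ω h1
          show dotp (c • u.ofLp) (X ω) = 0
          rw [dotp_smul, h1, mul_zero] }
  obtain ⟨y, hy, z, hz, hsum⟩ := K.exists_add_mem_mem_orthogonal (WithLp.toLp 2 α)
  have hyL : (y : Fin N₁ → ℝ) ∈ Lset μ X := hy
  have hzperp : ∀ u ∈ Lset μ X, dotp (z : Fin N₁ → ℝ) u = 0 := by
    intro u hu
    have := (Submodule.mem_orthogonal K z).mp hz (WithLp.toLp 2 u) hu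
    rw [dotp_comm]
    simpa [PiLp.inner_apply, RCLike.inner_apply, dotp, mul_comm] using this
  refine ⟨z, ⟨hzperp, ⟨y, hyL, ?_⟩⟩, ?_, ?_⟩
  · have : (z + y : Fin N₁ → ℝ) = α := by
      have := hsum
      funext n
      have h := congrFun (congrArg WithLp.ofLp hsum) n
      show z n + y n = α n
      rw [add_comm]
      exact h.symm
    rw [this]; exact hα
  · have hαn : α = (y + z : Fin N₁ → ℝ) := funext (fun n => congrFun (congrArg WithLp.ofLp hsum) n)
    rw [hαn]
    show (∑ n, z n) = ∑ n, (y n + z n)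
    rw [Finset.sum_add_distrib, hyL.1, zero_add]
  · filter_upwards [hyL.2] with ω h1
    have hαn : α = (y + z : Fin N₁ → ℝ) := funext (fun n => congrFun (congrArg WithLp.ofLp hsum) n)
    rw [hαn, dotp_add, h1, zero_add]
/-! Glue lemmas connecting the abstract analysis to the market setting. -/

noncomputable def Vfun {N₁ N₂ : ℕ} {Ω : Type*} (X : Ω → Fin N₁ → ℝ) (Y : Ω → Fin N₂ → ℝ)
    (W : ℝ) (α : Fin N₁ → ℝ) (ω : Ω) : ℝ :=
  dotp α (X ω) * W + ∑ n, |Y ω n|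

lemma dotp_sub' {N : ℕ} (a b x : Fin N → ℝ) :
    dotp (fun n => a n - b n) x = dotp a x - dotp b x := by
  unfold dotp
  rw [← Finset.sum_sub_distrib]
  congr 1; ext n; ring

lemma Vfun_comb {N₁ N₂ : ℕ} {Ω : Type*} (X : Ω → Fin N₁ → ℝ) (Y : Ω → Fin N₂ → ℝ)
    (W : ℝ) (s : ℝ) (γ δ : Fin N₁ → ℝ) (ω : Ω) :
    Vfun X Y W ((1-s)•γ + s•δ) ω = (1-s) * Vfun X Y W γ ω + s * Vfun X Y W δ ω := by
  unfold Vfun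
  rw [dotp_add, dotp_smul, dotp_smul]
  ring

lemma measurable_dotpX {N₁ : ℕ} {Ω : Type*} [MeasurableSpace Ω] {X : Ω → Fin N₁ → ℝ}
    (hXm : Measurable X) (α : Fin N₁ → ℝ) : Measurable (fun ω => dotp α (X ω)) := by
  unfold dotp
  apply Finset.measurable_sum
  intro n _
  exact ((measurable_pi_apply n).comp hXm).const_mul (α n)

lemma measurable_Vfun {N₁ N₂ : ℕ} {Ω : Type*} [MeasurableSpace Ω] {X : Ω → Fin N₁ → ℝ}
    {Y : Ω → Fin N₂ → ℝ} (hXm : Measurable X) (hYm : Measurable Y) (W : ℝ)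
    (α : Fin N₁ → ℝ) : Measurable (Vfun X Y W α) := by
  unfold Vfun
  apply ((measurable_dotpX hXm α).mul_const W).add
  apply Finset.measurable_sum
  intro n _
  exact ((measurable_pi_apply n).comp hYm).abs

lemma Aproj_convex {N₁ : ℕ} {Ω : Type*} [MeasurableSpace Ω] {μ : Measure Ω}
    {X : Ω → Fin N₁ → ℝ} {A : Set (Fin N₁ → ℝ)} (hAconv : Convex ℝ A) :
    Convex ℝ (Aproj μ X A) := by
  rintro x ⟨hx1, ux, hux, hxA⟩ y ⟨hy1, uy, huy, hyA⟩ a b ha hb hab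
  refine ⟨?_, a • ux + b • uy, ⟨?_, ?_⟩, ?_⟩
  · intro u hu
    have : dotp (a • x + b • y) u = a * dotp x u + b * dotp y u := by
      rw [dotp_add, dotp_smul, dotp_smul]
    rw [this, hx1 u hu, hy1 u hu]; ring
  · show (∑ n, (a * ux n + b * uy n)) = 0
    rw [Finset.sum_add_distrib, ← Finset.mul_sum, ← Finset.mul_sum, hux.1, huy.1]; ring
  · filter_upwards [hux.2, huy.2] with ω h1 h2
    show dotp (a • ux + b • uy) (X ω) = 0
    rw [dotp_add, dotp_smul, dotp_smul, h1, h2]; ring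
  · have : a • x + b • y + (a • ux + b • uy) = a • (x + ux) + b • (y + uy) := by
      rw [smul_add, smul_add]; abel
    rw [this]
    exact hAconv hxA hyA ha hb hab
lemma measurable_psifun_comp {Ω : Type*} [MeasurableSpace Ω] {c : ℝ} {f : Ω → ℝ}
    (hf : Measurable f) : Measurable (fun ω => psifun c (f ω)) := by
  unfold psifun gfunR
  apply Measurable.div
  · exact (((hf.div_const c).pow_const 2).const_add 1).inv
  · exact measurable_const.add
      ((Real.continuous_arctan.measurable.comp (hf.div_const c)).const_mul c)

lemma integrable_of_ae_nonneg_of_lintegral_lt {Ω : Type*} [MeasurableSpace Ω]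
    {μ : Measure Ω} {f : Ω → ℝ} (hm : Measurable f) (h0 : 0 ≤ᵐ[μ] f)
    (hl : ∫⁻ ω, ENNReal.ofReal (f ω) ∂μ < ⊤) : Integrable f μ := by
  refine ⟨hm.aestronglyMeasurable, ?_⟩
  rw [hasFiniteIntegral_iff_ofReal h0]
  exact hl

theorem star_ineq {N₁ : ℕ} {Ω : Type*} [MeasurableSpace Ω] {μ : Measure Ω}
    [IsProbabilityMeasure μ]
    {P : Set (Fin N₁ → ℝ)} (hPconv : Convex ℝ P)
    (V : (Fin N₁ → ℝ) → Ω → ℝ)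
    (hVcomb : ∀ (s : ℝ) (γ δ : Fin N₁ → ℝ) (ω : Ω),
      V ((1-s)•γ + s•δ) ω = (1-s) * V γ ω + s * V δ ω)
    (hVmeas : ∀ γ, Measurable (V γ))
    (hVnn : ∀ γ ∈ P, ∀ᵐ ω ∂μ, 0 ≤ V γ ω)
    {c : ℝ} (hc : 1 ≤ c)
    (hlogint : ∀ γ ∈ P, Integrable (fun ω => Real.log (gfunR c (V γ ω))) μ)
    {β : Fin N₁ → ℝ} (hβ : β ∈ P)
    (hmax : ∀ γ ∈ P, (∫ ω, Real.log (gfunR c (V γ ω)) ∂μ) - ∑ n, γ n ≤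
      (∫ ω, Real.log (gfunR c (V β ω)) ∂μ) - ∑ n, β n)
    {α : Fin N₁ → ℝ} (hα : α ∈ P) :
    Integrable (fun ω => psifun c (V β ω) * V α ω) μ ∧
    ∫ ω, psifun c (V β ω) * V α ω ∂μ ≤
      (∫ ω, psifun c (V β ω) * V β ω ∂μ) + ((∑ n, α n) - ∑ n, β n) := by
  have hc0 : (0:ℝ) < c := lt_of_lt_of_le zero_lt_one hc
  set t : ℕ → ℝ := fun k => 1 / ((k:ℝ) + 1) with ht_def
  have ht0 : ∀ k, 0 < t k := fun k => by positivity
  have ht1 : ∀ k, t k ≤ 1 := by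
    intro k
    rw [ht_def]
    rw [div_le_one (by positivity)]
    simp
  have htanti : ∀ {k k' : ℕ}, k ≤ k' → t k' ≤ t k := by
    intro k k' h
    apply one_div_le_one_div_of_le (by positivity)
    have : (k:ℝ) ≤ (k':ℝ) := Nat.cast_le.2 h
    linarith
  set αt : ℕ → (Fin N₁ → ℝ) := fun k => (1 - t k) • β + t k • α with hαt_def
  have hαtP : ∀ k, αt k ∈ P := by
    intro k
    exact hPconv hβ hα (by linarith [ht1 k]) (ht0 k).le (by ring)
  have hsum_αt : ∀ k, (∑ n, αt k n) = (1 - t k) * (∑ n, β n) + t k * (∑ n, α n) := by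
    intro k
    rw [hαt_def]
    simp only [Pi.add_apply, Pi.smul_apply, smul_eq_mul]
    rw [Finset.sum_add_distrib, ← Finset.mul_sum, ← Finset.mul_sum]
  -- the difference quotients
  set q : ℕ → Ω → ℝ := fun k ω =>
    (Real.log (gfunR c (V (αt k) ω)) - Real.log (gfunR c (V β ω))) / t k with hq_def
  have hqint : ∀ k, Integrable (q k) μ := by
    intro k
    exact (((hlogint _ (hαtP k)).sub (hlogint _ hβ)).div_const (t k))
  have hqmeas : ∀ k, Measurable (q k) := by
    intro k
    apply Measurable.div_const
    apply Measurable.sub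
    · exact Real.measurable_log.comp (by
        unfold gfunR
        exact measurable_const.add
          ((Real.continuous_arctan.measurable.comp ((hVmeas _).div_const c)).const_mul c))
    · exact Real.measurable_log.comp (by
        unfold gfunR
        exact measurable_const.add
          ((Real.continuous_arctan.measurable.comp ((hVmeas _).div_const c)).const_mul c))
  have hqle : ∀ k, ∫ ω, q k ω ∂μ ≤ (∑ n, α n) - ∑ n, β n := by
    intro k
    have h1 := hmax (αt k) (hαtP k)
    have h2 : ∫ ω, q k ω ∂μ =
        ((∫ ω, Real.log (gfunR c (V (αt k) ω)) ∂μ) -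
          ∫ ω, Real.log (gfunR c (V β ω)) ∂μ) / t k := by
      rw [hq_def]
      rw [← integral_sub (hlogint _ (hαtP k)) (hlogint _ hβ)]
      exact integral_div (t k) _
    rw [h2, div_le_iff₀ (ht0 k)]
    have h3 := hsum_αt k
    nlinarith [ht0 k]
  -- a.e. monotonicity of the quotients
  have hqmono : ∀ᵐ ω ∂μ, Monotone (fun k => q k ω) := by
    filter_upwards [hVnn β hβ, hVnn α hα] with ω h1 h2
    intro k k' hkk'
    have e1 : V (αt k) ω = (1 - t k) * V β ω + t k * V α ω := hVcomb (t k) β α ω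
    have e2 : V (αt k') ω = (1 - t k') * V β ω + t k' * V α ω := hVcomb (t k') β α ω
    show (Real.log (gfunR c (V (αt k) ω)) - Real.log (gfunR c (V β ω))) / t k ≤
      (Real.log (gfunR c (V (αt k') ω)) - Real.log (gfunR c (V β ω))) / t k'
    rw [e1, e2]
    exact slope_mono hc0 h1 h2 (ht0 k') (htanti hkk') (ht1 k)
  -- a.e. convergence of the quotients to the derivative
  have hqlim : ∀ᵐ ω ∂μ, Tendsto (fun k => q k ω) atTop
      (𝓝 (psifun c (V β ω) * (V α ω - V β ω))) := by
    filter_upwards [hVnn β hβ, hVnn α hα] with ω h1 h2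
    have hpath : HasDerivAt (fun τ : ℝ => V β ω + τ * (V α ω - V β ω))
        (V α ω - V β ω) 0 := by
      simpa using ((hasDerivAt_id (0:ℝ)).mul_const (V α ω - V β ω)).const_add (V β ω)
    have e0 : V β ω + 0 * (V α ω - V β ω) = V β ω := by ring
    have houter : HasDerivAt (fun y => Real.log (gfunR c y)) (psifun c (V β ω))
        (V β ω + 0 * (V α ω - V β ω)) := by
      rw [e0]; exact hasDerivAt_log_gfunR hc0 h1
    have hcomp := HasDerivAt.comp 0 houter hpath
    have hslope := hasDerivAt_iff_tendsto_slope.mp hcomp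
    have htt : Tendsto t atTop (𝓝[≠] (0:ℝ)) := by
      apply tendsto_nhdsWithin_of_tendsto_nhds_of_eventually_within
      · exact tendsto_one_div_add_atTop_nhds_zero_nat
      · exact Filter.Eventually.of_forall (fun k => (ne_of_gt (ht0 k)))
    have hfin := hslope.comp htt
    refine Filter.Tendsto.congr (fun k => ?_) hfin
    show slope (fun τ : ℝ => Real.log (gfunR c (V β ω + τ * (V α ω - V β ω)))) 0 (t k) = q k ω
    rw [slope_def_field]
    have e1 : V β ω + t k * (V α ω - V β ω) = V (αt k) ω := by
      rw [hVcomb (t k) β α ω]; ring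
    show (Real.log (gfunR c (V β ω + t k * (V α ω - V β ω))) -
        Real.log (gfunR c (V β ω + 0 * (V α ω - V β ω)))) / (t k - 0) = q k ω
    rw [e1, e0, sub_zero]
  -- monotone convergence for r k := q k - q 0
  set D : Ω → ℝ := fun ω => psifun c (V β ω) * (V α ω - V β ω) with hD_def
  set R : Ω → ℝ := fun ω => D ω - q 0 ω with hR_def
  have hRmeas : Measurable R := by
    apply Measurable.sub _ (hqmeas 0)
    exact (measurable_psifun_comp (hVmeas β)).mul ((hVmeas α).sub (hVmeas β))
  have hq0D : ∀ᵐ ω ∂μ, q 0 ω ≤ D ω := by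
    filter_upwards [hqmono, hqlim] with ω h1 h2
    exact ge_of_tendsto h2 (Filter.Eventually.of_forall (fun k => h1 (Nat.zero_le k)))
  have hRnn : 0 ≤ᵐ[μ] R := by
    filter_upwards [hq0D] with ω h
    simpa [hR_def] using h
  have hRlim : ∀ᵐ ω ∂μ, Tendsto (fun k => ENNReal.ofReal (q k ω - q 0 ω)) atTop
      (𝓝 (ENNReal.ofReal (R ω))) := by
    filter_upwards [hqlim] with ω h
    exact (ENNReal.continuous_ofReal.tendsto _).comp (h.sub tendsto_const_nhds)
  have hsup_eq : ∀ᵐ ω ∂μ, (⨆ k, ENNReal.ofReal (q k ω - q 0 ω)) = ENNReal.ofReal (R ω) := by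
    filter_upwards [hRlim, hqmono] with ω h1 h2
    have hmono2 : Monotone fun k => ENNReal.ofReal (q k ω - q 0 ω) := by
      intro k k' hkk'
      exact ENNReal.ofReal_le_ofReal (by linarith [h2 hkk'])
    exact tendsto_nhds_unique (tendsto_atTop_iSup hmono2) h1
  have hq0int := hqint 0
  have hrint : ∀ k, Integrable (fun ω => q k ω - q 0 ω) μ := fun k => (hqint k).sub hq0int
  have hrnn : ∀ k, 0 ≤ᵐ[μ] (fun ω => q k ω - q 0 ω) := by
    intro k
    filter_upwards [hqmono] with ω h
    simp only [Pi.zero_apply, sub_nonneg]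
    exact h (Nat.zero_le k)
  have hlint_r : ∀ k, ∫⁻ ω, ENNReal.ofReal (q k ω - q 0 ω) ∂μ =
      ENNReal.ofReal ((∫ ω, q k ω ∂μ) - ∫ ω, q 0 ω ∂μ) := by
    intro k
    rw [← ofReal_integral_eq_lintegral_ofReal (hrint k) (hrnn k),
      integral_sub (hqint k) hq0int]
  set c₀ : ℝ := (∑ n, α n) - ∑ n, β n with hc₀_def
  have hRlint : ∫⁻ ω, ENNReal.ofReal (R ω) ∂μ ≤ ENNReal.ofReal (c₀ - ∫ ω, q 0 ω ∂μ) := by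
    rw [lintegral_congr_ae (Filter.EventuallyEq.symm hsup_eq)]
    rw [lintegral_iSup' (f := fun k ω => ENNReal.ofReal (q k ω - q 0 ω)) (fun k => ((hqmeas k).sub (hqmeas 0)).ennreal_ofReal.aemeasurable)
      (by filter_upwards [hqmono] with ω h k k' hkk' using
        ENNReal.ofReal_le_ofReal (by linarith [h hkk']))]
    apply iSup_le
    intro k
    rw [hlint_r k]
    exact ENNReal.ofReal_le_ofReal (by linarith [hqle k])
  have hRint : Integrable R μ := by
    apply integrable_of_ae_nonneg_of_lintegral_lt hRmeas hRnn
    exact lt_of_le_of_lt hRlint ENNReal.ofReal_lt_top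
  have hRle : ∫ ω, R ω ∂μ ≤ c₀ - ∫ ω, q 0 ω ∂μ := by
    have h1 : ENNReal.ofReal (∫ ω, R ω ∂μ) ≤ ENNReal.ofReal (c₀ - ∫ ω, q 0 ω ∂μ) := by
      rw [ofReal_integral_eq_lintegral_ofReal hRint hRnn]
      exact hRlint
    have h2 : 0 ≤ c₀ - ∫ ω, q 0 ω ∂μ := by linarith [hqle 0]
    exact (ENNReal.ofReal_le_ofReal_iff h2).mp h1
  have hDint : Integrable D μ := by
    have : D = fun ω => R ω + q 0 ω := by
      funext ω; rw [hR_def]; ring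
    rw [this]
    exact hRint.add hq0int
  have hDle : ∫ ω, D ω ∂μ ≤ c₀ := by
    have h1 : ∫ ω, D ω ∂μ = (∫ ω, R ω ∂μ) + ∫ ω, q 0 ω ∂μ := by
      have : D = fun ω => R ω + q 0 ω := by funext ω; rw [hR_def]; ring
      rw [this, integral_add hRint hq0int]
    linarith [hRle]
  -- a := psifun (V β) * V β is bounded
  have haint : Integrable (fun ω => psifun c (V β ω) * V β ω) μ := by
    apply Integrable.mono' (integrable_const (1:ℝ))
      ((measurable_psifun_comp (hVmeas β)).mul (hVmeas β)).aestronglyMeasurable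
    filter_upwards [hVnn β hβ] with ω h
    show ‖psifun c (V β ω) * V β ω‖ ≤ 1
    rw [Real.norm_eq_abs, abs_of_nonneg (mul_nonneg (psifun_nonneg hc0 h) h)]
    exact psifun_mul_le_one hc0 h
  constructor
  · have : (fun ω => psifun c (V β ω) * V α ω) =
        fun ω => D ω + psifun c (V β ω) * V β ω := by
      funext ω; rw [hD_def]; ring
    rw [this]
    exact hDint.add haint
  · have h1 : (fun ω => psifun c (V β ω) * V α ω) =
        fun ω => D ω + psifun c (V β ω) * V β ω := by
      funext ω; rw [hD_def]; ring
    rw [h1, integral_add hDint haint]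
    linarith [hDle]
/-- The key first-order-condition lemma (Lemma `lemma-alpha-beta`, relations
`ineq-positive`, `alpha-ineq`, `alpha-eq` of the paper), stated pointwise for a fixed
conditional distribution `μ`.  If `α̂_i` maximize the truncated functionals
`α ↦ E ln g_i(⟨α,X⟩W + |Y|) − ⟨e,α⟩` over the compact set `A^p` and `α̂ ∈ A^p` is a limit
of a subsequence `α̂_{i_j}`, then:
(i) `⟨α̂,X⟩W + |Y| > 0` a.s.;
(ii) `E[⟨α̂−α,X⟩W/(⟨α̂,X⟩W + |Y|)] ≥ ⟨e,α̂−α⟩` for every `α ∈ A`;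
(iii) `E[⟨α̂,X⟩W/(⟨α̂,X⟩W + |Y|)] = ⟨e,α̂⟩`. -/
theorem first_order_conditions_for_alpha
    {N₁ N₂ : ℕ} {Ω : Type*} [MeasurableSpace Ω] (μ : Measure Ω) [IsProbabilityMeasure μ]
    (X : Ω → Fin N₁ → ℝ) (Y : Ω → Fin N₂ → ℝ) (hXm : Measurable X) (hYm : Measurable Y)
    (hX : ∀ᵐ ω ∂μ, ∀ n, 0 < X ω n) (hY : ∀ᵐ ω ∂μ, ∀ n, 0 ≤ Y ω n)
    (W : ℝ) (hW : 0 < W)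
    -- `A` is an admissible constraint set with `A^p` compact
    (A : Set (Fin N₁ → ℝ)) (hAne : A.Nonempty) (hAc : IsClosed A) (hAconv : Convex ℝ A)
    (hAD : A ⊆ Dset μ X)
    (hAsum : ∀ α ∈ A, 0 ≤ ∑ n, α n ∧ ∑ n, α n ≤ 1)
    (hAcone : ∀ α ∈ A, ∀ lam : ℝ, 0 ≤ lam → lam * ∑ n, α n ≤ 1 → lam • α ∈ A)
    (hApA : Aproj μ X A ⊆ A) (hApcpt : IsCompact (Aproj μ X A))
    -- assumption (A.2): a strategy with a.s. strictly positive wealth exists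
    (hpos : ∃ αt ∈ A, ∀ᵐ ω ∂μ, 0 < dotp αt (X ω) * W + ∑ n, |Y ω n|)
    -- the maximizers of the truncated problems
    (αi : ℕ → Fin N₁ → ℝ)
    (hαi : ∀ i : ℕ, 0 < i → αi i ∈ Aproj μ X A ∧
      ∀ α ∈ Aproj μ X A,
        (∫ ω, Real.log (gfun i (dotp α (X ω) * W + ∑ n, |Y ω n|)) ∂μ) - ∑ n, α n ≤
        (∫ ω, Real.log (gfun i (dotp (αi i) (X ω) * W + ∑ n, |Y ω n|)) ∂μ) - ∑ n, αi i n)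
    -- `α̂` is the limit of a subsequence of the `α̂_i`
    (αh : Fin N₁ → ℝ) (hαh : αh ∈ Aproj μ X A)
    (ij : ℕ → ℕ) (hij : StrictMono ij) (hij1 : ∀ j, 0 < ij j)
    (hconv : Filter.Tendsto (fun j => αi (ij j)) Filter.atTop (nhds αh)) :
    (∀ᵐ ω ∂μ, 0 < dotp αh (X ω) * W + ∑ n, |Y ω n|) ∧
    (∀ α ∈ A,
      ∑ n, (αh n - α n) ≤
        ∫ ω, dotp (fun n => αh n - α n) (X ω) * W /
          (dotp αh (X ω) * W + ∑ n, |Y ω n|) ∂μ) ∧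
    (∫ ω, dotp αh (X ω) * W / (dotp αh (X ω) * W + ∑ n, |Y ω n|) ∂μ = ∑ n, αh n) := by
  classical
  -- basic notation
  have hVm : ∀ γ, Measurable (Vfun X Y W γ) := measurable_Vfun hXm hYm W
  have hSnn : ∀ ω, 0 ≤ ∑ n, |Y ω n| := fun ω => Finset.sum_nonneg (fun n _ => abs_nonneg _)
  have hVnnA : ∀ γ ∈ A, ∀ᵐ ω ∂μ, 0 ≤ Vfun X Y W γ ω := by
    intro γ hγ
    filter_upwards [hAD hγ] with ω h
    exact add_nonneg (mul_nonneg h hW.le) (hSnn ω)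
  have hVnnP : ∀ γ ∈ Aproj μ X A, ∀ᵐ ω ∂μ, 0 ≤ Vfun X Y W γ ω :=
    fun γ h => hVnnA γ (hApA h)
  have hαhA : αh ∈ A := hApA hαh
  have hA0 : (0 : Fin N₁ → ℝ) ∈ A := by
    obtain ⟨a, ha⟩ := hAne
    have := hAcone a ha 0 le_rfl (by simp)
    simpa using this
  -- integrability of the truncated log-values
  have hlogint : ∀ i : ℕ, 0 < i → ∀ γ ∈ Aproj μ X A,
      Integrable (fun ω => Real.log (gfunR i (Vfun X Y W γ ω))) μ := by
    intro i hi γ hγ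
    have hci : (1:ℝ) ≤ (i:ℝ) := by exact_mod_cast hi
    apply Integrable.mono' (integrable_const (Real.log (3 * (i:ℝ))))
    · apply Measurable.aestronglyMeasurable
      apply Real.measurable_log.comp
      unfold gfunR
      exact measurable_const.add
        ((Real.continuous_arctan.measurable.comp ((hVm γ).div_const _)).const_mul _)
    · filter_upwards [hVnnP γ hγ] with ω h
      rw [Real.norm_eq_abs]
      exact abs_log_gfunR_le hci h
  -- the key first-order inequality at level i
  have hstar : ∀ i : ℕ, 0 < i → ∀ α ∈ Aproj μ X A,
      Integrable (fun ω => psifun i (Vfun X Y W (αi i) ω) * Vfun X Y W α ω) μ ∧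
      ∫ ω, psifun i (Vfun X Y W (αi i) ω) * Vfun X Y W α ω ∂μ ≤
        (∫ ω, psifun i (Vfun X Y W (αi i) ω) * Vfun X Y W (αi i) ω ∂μ) +
          ((∑ n, α n) - ∑ n, αi i n) := by
    intro i hi α hα
    have hci : (1:ℝ) ≤ (i:ℝ) := by exact_mod_cast hi
    refine star_ineq (Aproj_convex hAconv) (Vfun X Y W) (Vfun_comb X Y W) hVm hVnnP hci
      (hlogint i hi) (hαi i hi).1 ?_ hα
    intro γ hγ
    exact (hαi i hi).2 γ hγ
  -- the integral of ψ(V_i)·V_i lies in [0,1]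
  have hbound_a : ∀ i : ℕ, 0 < i →
      ∫ ω, psifun i (Vfun X Y W (αi i) ω) * Vfun X Y W (αi i) ω ∂μ ≤ 1 := by
    intro i hi
    have hint := (hstar i hi (αi i) (hαi i hi).1).1
    have h1 : ∫ ω, psifun i (Vfun X Y W (αi i) ω) * Vfun X Y W (αi i) ω ∂μ ≤
        ∫ _, (1:ℝ) ∂μ := by
      apply integral_mono_ae hint (integrable_const 1)
      filter_upwards [hVnnP (αi i) (hαi i hi).1] with ω h
      have hci : (0:ℝ) < (i:ℝ) := by exact_mod_cast hi
      exact psifun_mul_le_one hci h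
    simpa using h1
  -- the subsequence of indices, as reals, tends to infinity
  have hcj : Tendsto (fun j => ((ij j : ℕ) : ℝ)) atTop atTop :=
    tendsto_natCast_atTop_atTop.comp hij.tendsto_atTop
  -- pointwise convergence of wealths along the subsequence
  have hVconv : ∀ ω, Tendsto (fun j => Vfun X Y W (αi (ij j)) ω) atTop
      (𝓝 (Vfun X Y W αh ω)) := by
    intro ω
    unfold Vfun
    apply Filter.Tendsto.add_const
    apply Filter.Tendsto.mul_const
    unfold dotp
    apply tendsto_finset_sum
    intro n _
    exact (((continuous_apply n).tendsto αh).comp hconv).mul_const (X ω n)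
  have hsum_conv : Tendsto (fun j => ∑ n, αi (ij j) n) atTop (𝓝 (∑ n, αh n)) := by
    apply tendsto_finset_sum
    intro n _
    exact ((continuous_apply n).tendsto αh).comp hconv
  have hVβj_nn : ∀ᵐ ω ∂μ, ∀ j, 0 ≤ Vfun X Y W (αi (ij j)) ω :=
    ae_all_iff.2 (fun j => hVnnP _ (hαi _ (hij1 j)).1)
  have hmeas_b : ∀ (α : Fin N₁ → ℝ) (j : ℕ),
      Measurable (fun ω => psifun (ij j) (Vfun X Y W (αi (ij j)) ω) * Vfun X Y W α ω) :=
    fun α j => (measurable_psifun_comp (hVm _)).mul (hVm α)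
  -- ============ Part (i): a.s. positivity of the limit wealth ============
  have part1 : ∀ᵐ ω ∂μ, 0 < Vfun X Y W αh ω := by
    obtain ⟨αt, hαtA, hαtpos⟩ := hpos
    obtain ⟨αt', hαt'P, hαt'sum, hαt'ae⟩ := exists_proj μ X A hαtA
    set b : ℕ → Ω → ℝ :=
      fun j ω => psifun (ij j) (Vfun X Y W (αi (ij j)) ω) * Vfun X Y W αt' ω with hb_def
    have hbstar := fun j => hstar (ij j) (hij1 j) αt' hαt'P
    have hsum_t : 0 ≤ (∑ n, αt' n) ∧ (∑ n, αt' n) ≤ 1 := by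
      rw [hαt'sum]; exact hAsum αt hαtA
    have hble : ∀ j, ∫ ω, b j ω ∂μ ≤ 2 := by
      intro j
      have h1 := (hbstar j).2
      have h2 := hbound_a (ij j) (hij1 j)
      have h3 := (hAsum (αi (ij j)) (hApA (hαi _ (hij1 j)).1)).1
      calc ∫ ω, b j ω ∂μ ≤ _ := h1
      _ ≤ 2 := by linarith [hsum_t.1, hsum_t.2]
    have hbnn : ∀ᵐ ω ∂μ, ∀ j, 0 ≤ b j ω := by
      filter_upwards [hVβj_nn, hVnnP αt' hαt'P] with ω h1 h2
      intro j
      have hci : (0:ℝ) < ((ij j : ℕ) : ℝ) := by exact_mod_cast hij1 j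
      exact mul_nonneg (psifun_nonneg hci (h1 j)) h2
    have hlb : ∀ j, ∫⁻ ω, ENNReal.ofReal (b j ω) ∂μ ≤ ENNReal.ofReal 2 := by
      intro j
      rw [← ofReal_integral_eq_lintegral_ofReal (hbstar j).1
        (by filter_upwards [hbnn] with ω h using h j)]
      exact ENNReal.ofReal_le_ofReal (hble j)
    have hliminf_lt : ∀ᵐ ω ∂μ,
        Filter.liminf (fun j => ENNReal.ofReal (b j ω)) atTop < ⊤ := by
      apply ae_lt_top
      · exact Measurable.liminf (fun j => (hmeas_b αt' j).ennreal_ofReal)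
      · apply ne_of_lt
        apply lt_of_le_of_lt (lintegral_liminf_le (fun j => (hmeas_b αt' j).ennreal_ofReal))
        apply lt_of_le_of_lt (Filter.liminf_le_limsup)
        apply lt_of_le_of_lt (Filter.limsup_le_of_le (by isBoundedDefault)
          (Filter.Eventually.of_forall hlb))
        exact ENNReal.ofReal_lt_top
    filter_upwards [hliminf_lt, hVβj_nn, hαtpos, hαt'ae, hVnnA αh hαhA] with ω hlt h0 hp heq hnn
    by_contra hcon
    have h0' : Vfun X Y W αh ω = 0 := le_antisymm (not_lt.1 hcon) hnn
    have hxconv : Tendsto (fun j => Vfun X Y W (αi (ij j)) ω) atTop (𝓝 0) := by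
      rw [← h0']; exact hVconv ω
    have hψ : Tendsto (fun j => psifun ((ij j : ℕ) : ℝ) (Vfun X Y W (αi (ij j)) ω))
        atTop atTop :=
      tendsto_psifun_atTop hcj hxconv (Filter.Eventually.of_forall h0)
    have hVt'pos : 0 < Vfun X Y W αt' ω := by
      have : Vfun X Y W αt' ω = dotp αt (X ω) * W + ∑ n, |Y ω n| := by
        unfold Vfun; rw [heq]
      rw [this]; exact hp
    have hbt : Tendsto (fun j => b j ω) atTop atTop := hψ.atTop_mul_const hVt'pos
    have : Tendsto (fun j => ENNReal.ofReal (b j ω)) atTop (𝓝 ⊤) :=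
      ENNReal.tendsto_ofReal_atTop.comp hbt
    rw [this.liminf_eq] at hlt
    exact lt_irrefl _ hlt
  -- ============ Part (ii) for α ∈ A^p, quantitative form ============
  have hii : ∀ α ∈ Aproj μ X A,
      Integrable (fun ω => Vfun X Y W α ω / Vfun X Y W αh ω) μ ∧
      ∫ ω, Vfun X Y W α ω / Vfun X Y W αh ω ∂μ ≤ 1 + ((∑ n, α n) - ∑ n, αh n) := by
    intro α hα
    set b : ℕ → Ω → ℝ :=
      fun j ω => psifun (ij j) (Vfun X Y W (αi (ij j)) ω) * Vfun X Y W α ω with hb_def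
    have hbstar := fun j => hstar (ij j) (hij1 j) α hα
    -- dominated convergence for the a-terms
    have ha_lim : Tendsto
        (fun j => ∫ ω, psifun (ij j) (Vfun X Y W (αi (ij j)) ω) *
          Vfun X Y W (αi (ij j)) ω ∂μ) atTop (𝓝 1) := by
      have h := tendsto_integral_of_dominated_convergence (μ := μ)
        (bound := fun _ => (1:ℝ))
        (F := fun j ω => psifun (ij j) (Vfun X Y W (αi (ij j)) ω) *
          Vfun X Y W (αi (ij j)) ω)
        (f := fun _ => (1:ℝ))
        (fun j => ((measurable_psifun_comp (hVm _)).mul (hVm _)).aestronglyMeasurable)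
        (integrable_const 1)
        (by
          intro j
          filter_upwards [hVβj_nn] with ω h1
          have hci : (0:ℝ) < ((ij j : ℕ) : ℝ) := by exact_mod_cast hij1 j
          rw [Real.norm_eq_abs,
            abs_of_nonneg (mul_nonneg (psifun_nonneg hci (h1 j)) (h1 j))]
          exact psifun_mul_le_one hci (h1 j))
        (by
          filter_upwards [part1] with ω hv
          have hx := hVconv ω
          have := (tendsto_psifun_pos hcj hx hv).mul hx
          have he : 1 / Vfun X Y W αh ω * Vfun X Y W αh ω = 1 := by
            field_simp
          rwa [he] at this)
      simpa using h
    set c₁ : ℝ := 1 + ((∑ n, α n) - ∑ n, αh n) with hc₁_def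
    have hc₁nn : 0 ≤ c₁ := by
      have h1 := (hAsum α (hApA hα)).1
      have h2 := (hAsum αh hαhA).2
      rw [hc₁_def]; linarith
    have hw_lim : Tendsto
        (fun j => (∫ ω, psifun (ij j) (Vfun X Y W (αi (ij j)) ω) *
          Vfun X Y W (αi (ij j)) ω ∂μ) + ((∑ n, α n) - ∑ n, αi (ij j) n))
        atTop (𝓝 c₁) :=
      ha_lim.add (tendsto_const_nhds.sub hsum_conv)
    have hbnn : ∀ᵐ ω ∂μ, ∀ j, 0 ≤ b j ω := by
      filter_upwards [hVβj_nn, hVnnP α hα] with ω h1 h2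
      intro j
      have hci : (0:ℝ) < ((ij j : ℕ) : ℝ) := by exact_mod_cast hij1 j
      exact mul_nonneg (psifun_nonneg hci (h1 j)) h2
    -- Fatou
    have hfatou : ∫⁻ ω, ENNReal.ofReal (Vfun X Y W α ω / Vfun X Y W αh ω) ∂μ ≤
        ENNReal.ofReal c₁ := by
      have h1 : ∫⁻ ω, ENNReal.ofReal (Vfun X Y W α ω / Vfun X Y W αh ω) ∂μ ≤
          ∫⁻ ω, Filter.liminf (fun j => ENNReal.ofReal (b j ω)) atTop ∂μ := by
        apply lintegral_mono_ae
        filter_upwards [part1] with ω hv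
        have hb : Tendsto (fun j => b j ω) atTop
            (𝓝 (1 / Vfun X Y W αh ω * Vfun X Y W α ω)) := by
          have hx := hVconv ω
          exact (tendsto_psifun_pos hcj hx hv).mul_const _
        have : Tendsto (fun j => ENNReal.ofReal (b j ω)) atTop
            (𝓝 (ENNReal.ofReal (1 / Vfun X Y W αh ω * Vfun X Y W α ω))) :=
          (ENNReal.continuous_ofReal.tendsto _).comp hb
        rw [this.liminf_eq]
        apply le_of_eq
        congr 1
        rw [one_div, inv_mul_eq_div]
      apply le_trans h1
      apply le_trans (lintegral_liminf_le (fun j => (hmeas_b α j).ennreal_ofReal))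
      have h2 : ∀ j, ∫⁻ ω, ENNReal.ofReal (b j ω) ∂μ ≤
          ENNReal.ofReal ((∫ ω, psifun (ij j) (Vfun X Y W (αi (ij j)) ω) *
            Vfun X Y W (αi (ij j)) ω ∂μ) + ((∑ n, α n) - ∑ n, αi (ij j) n)) := by
        intro j
        rw [← ofReal_integral_eq_lintegral_ofReal (hbstar j).1
          (by filter_upwards [hbnn] with ω h using h j)]
        exact ENNReal.ofReal_le_ofReal (hbstar j).2
      have h3 : Tendsto
          (fun j => ENNReal.ofReal ((∫ ω, psifun (ij j) (Vfun X Y W (αi (ij j)) ω) *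
            Vfun X Y W (αi (ij j)) ω ∂μ) + ((∑ n, α n) - ∑ n, αi (ij j) n)))
          atTop (𝓝 (ENNReal.ofReal c₁)) :=
        (ENNReal.continuous_ofReal.tendsto _).comp hw_lim
      calc Filter.liminf (fun j => ∫⁻ ω, ENNReal.ofReal (b j ω) ∂μ) atTop ≤
          Filter.liminf (fun j => ENNReal.ofReal
            ((∫ ω, psifun (ij j) (Vfun X Y W (αi (ij j)) ω) *
              Vfun X Y W (αi (ij j)) ω ∂μ) + ((∑ n, α n) - ∑ n, αi (ij j) n))) atTop :=
            Filter.liminf_le_liminf (Filter.Eventually.of_forall h2)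
      _ = ENNReal.ofReal c₁ := h3.liminf_eq
    have hqnn : 0 ≤ᵐ[μ] fun ω => Vfun X Y W α ω / Vfun X Y W αh ω := by
      filter_upwards [part1, hVnnP α hα] with ω h1 h2
      exact div_nonneg h2 h1.le
    have hqmeas : Measurable (fun ω => Vfun X Y W α ω / Vfun X Y W αh ω) :=
      (hVm α).div (hVm αh)
    have hint : Integrable (fun ω => Vfun X Y W α ω / Vfun X Y W αh ω) μ :=
      integrable_of_ae_nonneg_of_lintegral_lt hqmeas hqnn
        (lt_of_le_of_lt hfatou ENNReal.ofReal_lt_top)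
    refine ⟨hint, ?_⟩
    have h4 : ENNReal.ofReal (∫ ω, Vfun X Y W α ω / Vfun X Y W αh ω ∂μ) ≤
        ENNReal.ofReal c₁ := by
      rw [ofReal_integral_eq_lintegral_ofReal hint hqnn]
      exact hfatou
    exact (ENNReal.ofReal_le_ofReal_iff hc₁nn).mp h4
  -- ============ Part (ii), final form ============
  have part2 : ∀ α ∈ A,
      ∑ n, (αh n - α n) ≤
        ∫ ω, dotp (fun n => αh n - α n) (X ω) * W /
          (dotp αh (X ω) * W + ∑ n, |Y ω n|) ∂μ := by
    intro α hαA
    obtain ⟨α', hα'P, hα'sum, hα'ae⟩ := exists_proj μ X A hαA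
    obtain ⟨hint', hle'⟩ := hii α' hα'P
    have heq : (fun ω => dotp (fun n => αh n - α n) (X ω) * W /
        (dotp αh (X ω) * W + ∑ n, |Y ω n|)) =ᵐ[μ]
        (fun ω => 1 - Vfun X Y W α' ω / Vfun X Y W αh ω) := by
      filter_upwards [part1, hα'ae] with ω hv heqd
      have hd : dotp (fun n => αh n - α n) (X ω) = dotp αh (X ω) - dotp α' (X ω) := by
        rw [dotp_sub', heqd]
      have hvne : Vfun X Y W αh ω ≠ 0 := ne_of_gt hv
      show dotp (fun n => αh n - α n) (X ω) * W / Vfun X Y W αh ω =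
        1 - Vfun X Y W α' ω / Vfun X Y W αh ω
      rw [hd]
      unfold Vfun at hvne ⊢
      field_simp
      ring
    rw [integral_congr_ae heq]
    rw [integral_sub (integrable_const 1) hint']
    have h5 : ∫ (_ : Ω), (1:ℝ) ∂μ = 1 := by simp
    rw [h5]
    have h6 : (∑ n, (αh n - α n)) = (∑ n, αh n) - ∑ n, α n := Finset.sum_sub_distrib _ _
    rw [h6, ← hα'sum]
    linarith [hle']
  -- ============ Part (iii) ============
  refine ⟨part1, part2, ?_⟩
  have hbase_meas : Measurable (fun ω => dotp αh (X ω) * W /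
      (dotp αh (X ω) * W + ∑ n, |Y ω n|)) :=
    ((measurable_dotpX hXm αh).mul_const W).div (hVm αh)
  have hbase_bd : ∀ᵐ ω ∂μ, 0 ≤ dotp αh (X ω) * W / Vfun X Y W αh ω ∧
      dotp αh (X ω) * W / Vfun X Y W αh ω ≤ 1 := by
    filter_upwards [part1, hAD hαhA] with ω h1 h2
    constructor
    · exact div_nonneg (mul_nonneg h2 hW.le) h1.le
    · rw [div_le_one h1]
      unfold Vfun
      linarith [hSnn ω]
  have hbase_int : Integrable (fun ω => dotp αh (X ω) * W / Vfun X Y W αh ω) μ := by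
    apply Integrable.mono' (integrable_const (1:ℝ)) hbase_meas.aestronglyMeasurable
    filter_upwards [hbase_bd] with ω h
    show ‖dotp αh (X ω) * W / Vfun X Y W αh ω‖ ≤ 1
    rw [Real.norm_eq_abs, abs_of_nonneg h.1]
    exact h.2
  have hge : (∑ n, αh n) ≤ ∫ ω, dotp αh (X ω) * W / Vfun X Y W αh ω ∂μ := by
    have h := part2 0 hA0
    simp only [Pi.zero_apply, sub_zero] at h
    exact h
  have hle : ∫ ω, dotp αh (X ω) * W / Vfun X Y W αh ω ∂μ ≤ ∑ n, αh n := by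
    by_cases hc1 : (1:ℝ) ≤ ∑ n, αh n
    · have h1 : ∫ ω, dotp αh (X ω) * W / Vfun X Y W αh ω ∂μ ≤ ∫ _, (1:ℝ) ∂μ := by
        apply integral_mono_ae hbase_int (integrable_const 1)
        filter_upwards [hbase_bd] with ω h using h.2
      simp at h1
      linarith
    · push_neg at hc1
      set Sh : ℝ := ∑ n, αh n with hSh_def
      have hSh0 : 0 ≤ Sh := (hAsum αh hαhA).1
      set lam : ℝ := if Sh ≤ 1/2 then 2 else 1/Sh with hlam_def
      have hlam1 : 1 < lam := by
        rw [hlam_def]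
        split_ifs with h
        · norm_num
        · push_neg at h
          rw [lt_div_iff₀ (by linarith)]
          linarith
      have hlam0 : 0 ≤ lam := by linarith
      have hlamSh : lam * Sh ≤ 1 := by
        rw [hlam_def]
        split_ifs with h
        · linarith
        · push_neg at h
          rw [div_mul_eq_mul_div, mul_comm, ← div_mul_eq_mul_div]
          rw [div_self (by positivity : Sh ≠ 0)]
          norm_num
      have hmem : lam • αh ∈ A := hAcone αh hαhA lam hlam0 hlamSh
      have hII := part2 (lam • αh) hmem
      have he1 : (fun ω => dotp (fun n => αh n - (lam • αh) n) (X ω) * W /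
          (dotp αh (X ω) * W + ∑ n, |Y ω n|)) =
          fun ω => (1 - lam) * (dotp αh (X ω) * W / Vfun X Y W αh ω) := by
        funext ω
        have hd : dotp (fun n => αh n - (lam • αh) n) (X ω) =
            (1 - lam) * dotp αh (X ω) := by
          unfold dotp
          rw [Finset.mul_sum]
          apply Finset.sum_congr rfl
          intro n _
          simp only [Pi.smul_apply, smul_eq_mul]
          ring
        show dotp (fun n => αh n - (lam • αh) n) (X ω) * W / Vfun X Y W αh ω = _
        rw [hd]
        ring
      rw [he1, integral_const_mul] at hII
      have he2 : (∑ n, (αh n - (lam • αh) n)) = (1 - lam) * Sh := by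
        rw [Finset.sum_sub_distrib]
        have : (∑ n, (lam • αh) n) = lam * Sh := by
          rw [hSh_def, Finset.mul_sum]
          apply Finset.sum_congr rfl
          intro n _
          simp
        rw [this]; ring
      rw [he2] at hII
      nlinarith [hII]
  exact le_antisymm hle hge
end

section
/- In the one-period market setting, let α̂ ∈ ℝ^{N₁} satisfy ⟨e,α̂⟩ ∈ [0,1], μ(d > 0) = 1 where d = ⟨α̂,X⟩W + |Y|, and E_μ[⟨α̂,X⟩W/d] = ⟨e,α̂⟩. Let B ⊆ ℝ₊^{N₂} be a nonempty closed convex set such that |β| ∈ [0,1] for all β ∈ B, λβ ∈ B for all β ∈ B and λ ∈ [0, 1/|β|] (λ ∈ [0,∞) if |β| = 0), and such that for every n with μ(Y^n > 0) > 0 there exists β ∈ B with β^n > 0. Then the set B̃ = {β ∈ B : |β| = 1 − ⟨e,α̂⟩} is nonempty, and for any β̂ ∈ B̃ maximizing β ↦ E_μ[⟨ln β, Y⟩/d] over B̃ and any β ∈ B one has: (i) E_μ[⟨ln β̂ − ln β, Y⟩/d] ≥ |β̂| − |β|; and (ii) E_μ[(|Y| − Σ_n β^n Y^n/β̂^n)/d]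 ≥ |β̂| − |β|, where in (ii) the term β^n Y^n/β̂^n is taken to be 0 when β̂^n = 0. -/
open MeasureTheory
open scoped BigOperators Classical

/-- `E_μ[f] ≤ c` in the extended sense: `E⁺[f] + c⁻ ≤ E⁺[−f] + c⁺`, which for
quasi-integrable `f` is exactly `E_μ[f] ≤ c` (no integrability is presupposed). -/
def ExpLE {Ω : Type*} [MeasurableSpace Ω] (μ : Measure Ω) (f : Ω → ℝ) (c : ℝ) : Prop :=
  (∫⁻ ω, ENNReal.ofReal (f ω) ∂μ) + ENNReal.ofReal (-c) ≤
    (∫⁻ ω, ENNReal.ofReal (-f ω) ∂μ) + ENNReal.ofReal c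

/-- `E_μ[f] ≥ c` in the extended sense. -/
def ExpGE {Ω : Type*} [MeasurableSpace Ω] (μ : Measure Ω) (f : Ω → ℝ) (c : ℝ) : Prop :=
  ExpLE μ (fun ω => -f ω) (-c)

lemma aux_slope_mono {x y ε ε' : ℝ} (hx : 0 < x) (hy : 0 < y) (hε : 0 < ε)
    (hεε' : ε ≤ ε') (hε'1 : ε' ≤ 1) :
    (Real.log ((1-ε')*x + ε'*y) - Real.log x)/ε' ≤ (Real.log ((1-ε)*x + ε*y) - Real.log x)/ε := by
  have hε' : 0 < ε' := lt_of_lt_of_le hε hεε'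
  set lam := ε/ε' with hlam
  have hlam0 : 0 ≤ lam := by positivity
  have hlam1 : lam ≤ 1 := by rw [hlam, div_le_one hε']; exact hεε'
  have hz' : (0:ℝ) < (1-ε')*x + ε'*y := by
    have h1 : 0 ≤ (1-ε')*x := mul_nonneg (by linarith) hx.le
    have h2 : 0 < ε'*y := mul_pos hε' hy
    linarith
  have hconc := strictConcaveOn_log_Ioi.concaveOn.2 (Set.mem_Ioi.2 hx) (Set.mem_Ioi.2 hz')
      (by linarith : (0:ℝ) ≤ 1 - lam) hlam0 (by ring)
  have hle : lam * ε' = ε := by rw [hlam]; field_simp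
  have hkey : (1-lam) • x + lam • ((1-ε')*x + ε'*y) = (1-ε)*x + ε*y := by
    have h3 : lam • ((1-ε')*x + ε'*y) = lam * ((1-ε')*x + ε'*y) := rfl
    have h2 : (1-lam) • x = (1-lam) * x := rfl
    rw [h3, h2]
    nlinarith [hle]
  rw [hkey] at hconc
  have hc2 : (1-lam) * Real.log x + lam * Real.log ((1-ε')*x + ε'*y)
      ≤ Real.log ((1-ε)*x + ε*y) := hconc
  rw [div_le_div_iff₀ hε' hε]
  have hle2 : lam * ε' * Real.log x = ε * Real.log x := by rw [hle]
  have hle3 : lam * ε' * Real.log ((1-ε')*x + ε'*y) = ε * Real.log ((1-ε')*x + ε'*y) := by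
    rw [hle]
  nlinarith [mul_le_mul_of_nonneg_right hc2 hε'.le, hle2, hle3]

lemma aux_eps_tendsto : Filter.Tendsto (fun k : ℕ => (1:ℝ)/(k+2)) Filter.atTop (nhds 0) := by
  have := Filter.Tendsto.comp tendsto_inv_atTop_zero
    (Filter.tendsto_atTop_add_const_right Filter.atTop (2:ℝ) tendsto_natCast_atTop_atTop)
  simpa [one_div, Function.comp_def] using this

lemma aux_slope_tendsto {x v : ℝ} (hx : 0 < x) :
    Filter.Tendsto (fun k : ℕ => (Real.log ((1-(1:ℝ)/(k+2))*x + (1/(k+2))*v) - Real.log x)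
      / ((1:ℝ)/(k+2))) Filter.atTop (nhds ((v - x)/x)) := by
  have hεk := aux_eps_tendsto
  by_cases hvx : v = x
  · have h0 : (fun k : ℕ => (Real.log ((1-(1:ℝ)/(k+2))*x + (1/(k+2))*v) - Real.log x)
      / ((1:ℝ)/(k+2))) = fun _ => 0 := by
      funext k; rw [hvx, show (1-(1:ℝ)/(k+2))*x + (1/(k+2))*x = x by ring]; simp
    rw [h0, hvx]; simpa using tendsto_const_nhds
  · have hda := (Real.hasDerivAt_log (ne_of_gt hx))
    rw [hasDerivAt_iff_tendsto_slope] at hda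
    have hvx' : v - x ≠ 0 := sub_ne_zero.mpr hvx
    have hyk : Filter.Tendsto (fun k : ℕ => (1-(1:ℝ)/(k+2))*x + (1/(k+2))*v) Filter.atTop
        (nhdsWithin x {x}ᶜ) := by
      rw [tendsto_nhdsWithin_iff]
      constructor
      · have h2 : Filter.Tendsto (fun k : ℕ => x + (1:ℝ)/(k+2) * (v - x)) Filter.atTop
            (nhds (x + 0 * (v-x))) := tendsto_const_nhds.add (hεk.mul tendsto_const_nhds)
        simp only [zero_mul, add_zero] at h2
        convert h2 using 2 with k; ring
      · filter_upwards with k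
        simp only [Set.mem_compl_iff, Set.mem_singleton_iff]
        intro h
        have hk : (1:ℝ)/(k+2) ≠ 0 := by positivity
        have h2 : (1:ℝ)/(k+2) * (v - x) = 0 := by nlinarith [h]
        rcases mul_eq_zero.mp h2 with h3 | h3
        · exact hk h3
        · exact hvx' h3
    have hcomp := hda.comp hyk
    have heq : ∀ k : ℕ, slope Real.log x ((1-(1:ℝ)/(k+2))*x + (1/(k+2))*v) * (v - x)
        = (Real.log ((1-(1:ℝ)/(k+2))*x + (1/(k+2))*v) - Real.log x) / ((1:ℝ)/(k+2)) := by
      intro k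
      have hk : ((k:ℝ)+2) ≠ 0 := by positivity
      have h1 : (1-(1:ℝ)/(k+2))*x + (1/(k+2))*v - x = (1/(k+2)) * (v - x) := by ring
      rw [slope_def_field, h1]
      field_simp
    have hfin := hcomp.mul (tendsto_const_nhds (x := v - x))
    simp only [Function.comp] at hfin
    have hx' : x⁻¹ * (v - x) = (v - x)/x := by field_simp
    rw [hx'] at hfin
    exact Filter.Tendsto.congr (fun k => heq k) hfin

lemma aux_lint_ne_top {Ω : Type*} [MeasurableSpace Ω] {μ : Measure Ω} {f : Ω → ℝ}
    (hf : Integrable f μ) : (∫⁻ ω, ENNReal.ofReal (f ω) ∂μ) ≠ ⊤ := by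
  refine ne_top_of_le_ne_top hf.2.ne ?_
  refine lintegral_mono fun ω => ?_
  rw [← ofReal_norm_eq_enorm, Real.norm_eq_abs]
  exact ENNReal.ofReal_le_ofReal (le_abs_self _)

lemma aux_expGE {Ω : Type*} [MeasurableSpace Ω] {μ : Measure Ω} {f : Ω → ℝ} {c : ℝ}
    (hf : Integrable f μ) (h : c ≤ ∫ ω, f ω ∂μ) : ExpGE μ f c := by
  unfold ExpGE ExpLE
  simp only [neg_neg]
  have ha : (∫⁻ ω, ENNReal.ofReal (f ω) ∂μ) ≠ ⊤ := aux_lint_ne_top hf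
  have hb : (∫⁻ ω, ENNReal.ofReal (-f ω) ∂μ) ≠ ⊤ := by
    simpa using aux_lint_ne_top hf.neg
  rw [integral_eq_lintegral_pos_part_sub_lintegral_neg_part hf] at h
  rw [← ENNReal.toReal_le_toReal (by finiteness) (by finiteness),
    ENNReal.toReal_add hb ENNReal.ofReal_ne_top, ENNReal.toReal_add ha ENNReal.ofReal_ne_top,
    ENNReal.toReal_ofReal', ENNReal.toReal_ofReal']
  have hmax : (c ⊔ 0) - ((-c) ⊔ 0) = c := by
    rcases le_total 0 c with hc | hc
    · rw [sup_eq_left.mpr hc, sup_eq_right.mpr (neg_nonpos.mpr hc)]; ring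
    · rw [sup_eq_right.mpr hc, sup_eq_left.mpr (neg_nonneg.mpr hc)]; ring
  linarith

lemma aux_integrable_coeff {Ω : Type*} [MeasurableSpace Ω] {μ : Measure Ω} {N₂ : ℕ}
    {Y : Ω → Fin N₂ → ℝ} {d : Ω → ℝ} (hYm : Measurable Y) (hdm : Measurable d)
    (hY : ∀ᵐ ω ∂μ, ∀ n, 0 ≤ Y ω n) (hdpos : ∀ᵐ ω ∂μ, 0 < d ω)
    (hR : Integrable (fun ω => (∑ n, |Y ω n|)/d ω) μ) (c : Fin N₂ → ℝ) :
    Integrable (fun ω => (∑ n, c n * Y ω n)/d ω) μ := by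
  have hg : Integrable (fun ω => (∑ m, |c m|) * ((∑ n, |Y ω n|)/d ω)) μ := hR.const_mul _
  have hfm : Measurable (fun ω => (∑ n, c n * Y ω n)/d ω) := by
    exact (Finset.measurable_sum _ fun n _ =>
      (measurable_const.mul ((measurable_pi_apply n).comp hYm))).div hdm
  refine hg.mono hfm.aestronglyMeasurable ?_
  filter_upwards [hY, hdpos] with ω hYω hdω
  rw [Real.norm_eq_abs, Real.norm_eq_abs, abs_div, abs_of_pos hdω]
  have h1 : |∑ n, c n * Y ω n| ≤ ∑ n, |c n| * Y ω n := by
    refine (Finset.abs_sum_le_sum_abs _ _).trans ?_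
    refine Finset.sum_le_sum fun n _ => ?_
    rw [abs_mul, abs_of_nonneg (hYω n)]
  have h2 : ∑ n, |c n| * Y ω n ≤ (∑ m, |c m|) * ∑ n, |Y ω n| := by
    rw [Finset.mul_sum]
    refine Finset.sum_le_sum fun n _ => ?_
    rw [abs_of_nonneg (hYω n)]
    exact mul_le_mul_of_nonneg_right
      (Finset.single_le_sum (fun m _ => abs_nonneg (c m)) (Finset.mem_univ n)) (hYω n)
  have hsum0 : 0 ≤ ∑ n, |Y ω n| := Finset.sum_nonneg fun n _ => abs_nonneg _
  have hK : 0 ≤ ∑ m, |c m| := Finset.sum_nonneg fun m _ => abs_nonneg _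
  have hr : |(∑ m, |c m|) * ((∑ n, |Y ω n|)/d ω)| = ((∑ m, |c m|) * ∑ n, |Y ω n|)/d ω := by
    rw [abs_of_nonneg (mul_nonneg hK (div_nonneg hsum0 hdω.le)), mul_div_assoc]
  rw [hr]
  gcongr
  exact h1.trans h2

set_option maxHeartbeats 2000000 in
/-- The lemma establishing inequalities (beta-ineq) and (corollary) of the paper for the
endogenous-asset component of the relative growth optimal strategy, stated pointwise for
a fixed conditional distribution `μ`.  Here `d = ⟨α̂,X⟩W + |Y|`,
`B̃ = {β ∈ B : |β| = 1 − ⟨e,α̂⟩}` is nonempty, and any maximizer `β̂` over `B̃` of the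
extended-real functional `β ↦ E[⟨ln β, Y⟩/d]` (with value `−∞` when some `β^n = 0` while
`μ(Y^n > 0) > 0`, per the convention `a·ln 0 = −∞` for `a > 0`) satisfies, for every `β ∈ B`:
(i) `E[⟨ln β̂ − ln β, Y⟩/d] ≥ |β̂| − |β|` (trivially, i.e. with value `+∞`, when some
`β^n = 0` while `μ(Y^n > 0) > 0`); and
(ii) `E[(|Y| − Σ_n β^n Y^n/β̂^n)/d] ≥ |β̂| − |β|`, with `β^n Y^n/β̂^n := 0` when `β̂^n = 0`. -/
theorem beta_inequalities
    {N₁ N₂ : ℕ} {Ω : Type*} [MeasurableSpace Ω] (μ : Measure Ω) [IsProbabilityMeasure μ]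
    (X : Ω → Fin N₁ → ℝ) (Y : Ω → Fin N₂ → ℝ) (hXm : Measurable X) (hYm : Measurable Y)
    (hX : ∀ᵐ ω ∂μ, ∀ n, 0 < X ω n) (hY : ∀ᵐ ω ∂μ, ∀ n, 0 ≤ Y ω n)
    (W : ℝ) (hW : 0 < W)
    (αh : Fin N₁ → ℝ) (hαh0 : 0 ≤ ∑ n, αh n) (hαh1 : ∑ n, αh n ≤ 1)
    (d : Ω → ℝ) (hd : ∀ ω, d ω = dotp αh (X ω) * W + ∑ n, |Y ω n|)
    (hdpos : ∀ᵐ ω ∂μ, 0 < d ω)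
    (hint : Integrable (fun ω => dotp αh (X ω) * W / d ω) μ)
    (heq : ∫ ω, dotp αh (X ω) * W / d ω ∂μ = ∑ n, αh n)
    -- `B` is the constraint set for the endogenous assets
    (B : Set (Fin N₂ → ℝ)) (hBne : B.Nonempty) (hBc : IsClosed B) (hBconv : Convex ℝ B)
    (hBpos : ∀ β ∈ B, ∀ n, 0 ≤ β n) (hBsum : ∀ β ∈ B, ∑ n, β n ≤ 1)
    (hBcone : ∀ β ∈ B, ∀ lam : ℝ, 0 ≤ lam → lam * ∑ n, β n ≤ 1 → lam • β ∈ B)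
    (hBsupp : ∀ n, 0 < μ {ω | 0 < Y ω n} → ∃ β ∈ B, 0 < β n) :
    -- `B̃` is nonempty
    (∃ β ∈ B, ∑ n, β n = 1 - ∑ n, αh n) ∧
    -- conclusions for any maximizer `β̂` over `B̃`
    (∀ βh ∈ B, ∑ n, βh n = 1 - ∑ n, αh n →
      (∀ β ∈ B, ∑ n, β n = 1 - ∑ n, αh n →
        (fun γ : Fin N₂ → ℝ =>
          if ∃ n, γ n = 0 ∧ 0 < μ {ω | 0 < Y ω n} then (⊥ : EReal)
          else ((∫ ω, (∑ n, Real.log (γ n) * Y ω n) / d ω ∂μ : ℝ) : EReal)) β ≤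
        (fun γ : Fin N₂ → ℝ =>
          if ∃ n, γ n = 0 ∧ 0 < μ {ω | 0 < Y ω n} then (⊥ : EReal)
          else ((∫ ω, (∑ n, Real.log (γ n) * Y ω n) / d ω ∂μ : ℝ) : EReal)) βh) →
      ∀ β ∈ B,
        ((∃ n, β n = 0 ∧ 0 < μ {ω | 0 < Y ω n}) ∨
          ExpGE μ (fun ω => (∑ n, (Real.log (βh n) - Real.log (β n)) * Y ω n) / d ω)
            ((∑ n, βh n) - ∑ n, β n)) ∧
        ExpGE μ (fun ω => ((∑ n, |Y ω n|) -
            ∑ n, (if βh n = 0 then 0 else β n * Y ω n / βh n)) / d ω)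
          ((∑ n, βh n) - ∑ n, β n)) := by
  classical
  -- notation
  set t : ℝ := 1 - ∑ n, αh n with ht_def
  have ht0 : 0 ≤ t := by rw [ht_def]; linarith
  have ht1 : t ≤ 1 := by rw [ht_def]; linarith
  set P : Fin N₂ → Prop := fun n => 0 < μ {ω | 0 < Y ω n} with hP_def
  -- measurability of d
  have hdm : Measurable d := by
    have hde : d = fun ω => dotp αh (X ω) * W + ∑ n, |Y ω n| := funext hd
    rw [hde]
    have h1 : Measurable fun ω => dotp αh (X ω) :=
      Finset.measurable_sum _ fun n _ => measurable_const.mul ((measurable_pi_apply n).comp hXm)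
    have h2 : Measurable fun ω => ∑ n, |Y ω n| :=
      Finset.measurable_sum _ fun n _ => ((measurable_pi_apply n).comp hYm).abs
    exact (h1.mul measurable_const).add h2
  -- the function R = |Y|/d
  set R : Ω → ℝ := fun ω => (∑ n, |Y ω n|)/d ω with hR_def
  have hRae : R =ᵐ[μ] fun ω => 1 - dotp αh (X ω) * W / d ω := by
    filter_upwards [hdpos] with ω hω
    have h1 : (∑ n, |Y ω n|) = d ω - dotp αh (X ω)*W := by rw [hd ω]; ring
    rw [hR_def]
    simp only
    rw [h1, sub_div, div_self (ne_of_gt hω)]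
  have hRint : Integrable R μ := ((integrable_const (1:ℝ)).sub hint).congr hRae.symm
  have hRval : ∫ ω, R ω ∂μ = t := by
    rw [integral_congr_ae hRae, integral_sub (integrable_const 1) hint, integral_const, heq]
    simp [ht_def]
  -- coordinates with negligible Y are a.e. zero
  have hYzero : ∀ᵐ ω ∂μ, ∀ n, ¬ P n → Y ω n = 0 := by
    rw [ae_all_iff]
    intro n
    by_cases hn : P n
    · filter_upwards with ω h'; exact absurd hn h'
    · have hz : μ {ω' | 0 < Y ω' n} = 0 := by
        rw [hP_def] at hn; simpa using not_lt.mp hn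
      have hnm := measure_eq_zero_iff_ae_notMem.mp hz
      filter_upwards [hnm, hY] with ω h1 h2 _
      exact le_antisymm (not_lt.mp h1) (h2 n)
  -- a generic integrability fact
  have hcoeff : ∀ c : Fin N₂ → ℝ, Integrable (fun ω => (∑ n, c n * Y ω n)/d ω) μ :=
    fun c => aux_integrable_coeff hYm hdm hY hdpos hRint c
  -- `0 ∈ B`
  have hzeroB : (0 : Fin N₂ → ℝ) ∈ B := by
    obtain ⟨β₀, hβ₀⟩ := hBne
    have := hBcone β₀ hβ₀ 0 le_rfl (by simp)
    simpa using this
  -- a member of B with prescribed sum of coordinates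
  have hscale : ∀ β₀ ∈ B, 0 < ∑ n, β₀ n → ∀ c : ℝ, 0 ≤ c → c ≤ 1 →
      ∃ γ ∈ B, (∑ n, γ n = c) ∧ ∀ n, γ n = (c / ∑ m, β₀ m) * β₀ n := by
    intro β₀ hβ₀ hs c hc0 hc1
    set s := ∑ n, β₀ n with hs_def
    refine ⟨(c/s) • β₀, ?_, ?_, fun n => rfl⟩
    · refine hBcone β₀ hβ₀ (c/s) (by positivity) ?_
      rw [← hs_def, div_mul_cancel₀ _ (ne_of_gt hs)]
      exact hc1
    · have : ∑ n, ((c/s) • β₀) n = (c/s) * ∑ n, β₀ n := by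
        simp [Finset.mul_sum]
      rw [this, ← hs_def, div_mul_cancel₀ _ (ne_of_gt hs)]
  -- if Y is a.e. zero then t = 0
  have hYzt : (∀ᵐ ω ∂μ, ∀ n, Y ω n = 0) → t = 0 := by
    intro hz
    have : R =ᵐ[μ] 0 := by
      filter_upwards [hz] with ω hω
      simp [hR_def, hω]
    rw [← hRval, integral_eq_zero_of_ae this]
  -- existence of a supported β₀ when t > 0
  have hsupp_exists : 0 < t → ∃ n, P n := by
    intro htpos
    by_contra hno
    push_neg at hno
    have : ∀ᵐ ω ∂μ, ∀ n, Y ω n = 0 := by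
      filter_upwards [hYzero] with ω h n
      exact h n (hno n)
    exact absurd (hYzt this) (ne_of_gt htpos)
  -- nonemptiness of B̃
  have hBt : ∃ β ∈ B, ∑ n, β n = t := by
    rcases eq_or_lt_of_le ht0 with hteq | htpos
    · exact ⟨0, hzeroB, by simp [← hteq]⟩
    · obtain ⟨n, hn⟩ := hsupp_exists htpos
      obtain ⟨β₀, hβ₀B, hβ₀n⟩ := hBsupp n hn
      have hs : 0 < ∑ m, β₀ m :=
        lt_of_lt_of_le hβ₀n (Finset.single_le_sum (fun m _ => hBpos β₀ hβ₀B m) (Finset.mem_univ n))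
      obtain ⟨γ, hγB, hγs, _⟩ := hscale β₀ hβ₀B hs t ht0 ht1
      exact ⟨γ, hγB, hγs⟩
  refine ⟨hBt, ?_⟩
  intro βh hβhB hβht hmax β hβB
  simp only at hmax
  rcases eq_or_lt_of_le ht0 with hteq | htpos
  -- degenerate case t = 0 : Y = 0 a.e.
  · have hRz : R =ᵐ[μ] 0 := by
      have h0 : ∫ ω, R ω ∂μ = 0 := by rw [hRval, ← hteq]
      have hnn : 0 ≤ᵐ[μ] R := by
        filter_upwards [hdpos, hY] with ω h1 h2
        exact div_nonneg (Finset.sum_nonneg fun n _ => abs_nonneg _) h1.le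
      exact (integral_eq_zero_iff_of_nonneg_ae hnn hRint).mp h0
    have hYz : ∀ᵐ ω ∂μ, ∀ n, Y ω n = 0 := by
      filter_upwards [hRz, hdpos, hY] with ω h1 h2 h3
      intro n
      have hs : (∑ m, |Y ω m|) = 0 := by
        have := h1
        simp only [hR_def, Pi.zero_apply] at this
        rcases div_eq_zero_iff.mp this with h | h
        · exact h
        · exact absurd h (ne_of_gt h2)
      have := (Finset.sum_eq_zero_iff_of_nonneg (fun m _ => abs_nonneg (Y ω m))).mp hs n
        (Finset.mem_univ n)
      exact abs_eq_zero.mp this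
    constructor
    · right
      apply aux_expGE (hcoeff _)
      have hz : (fun ω => (∑ n, (Real.log (βh n) - Real.log (β n)) * Y ω n) / d ω) =ᵐ[μ] 0 := by
        filter_upwards [hYz] with ω hω
        simp [hω]
      rw [integral_congr_ae hz]
      simp only [integral_zero, Pi.zero_apply]
      have : ∑ n, β n ≥ 0 := Finset.sum_nonneg fun n _ => hBpos β hβB n
      rw [hβht]
      linarith [hteq]
    · have hz : (fun ω => ((∑ n, |Y ω n|) -
          ∑ n, (if βh n = 0 then 0 else β n * Y ω n / βh n)) / d ω) =ᵐ[μ] 0 := by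
        filter_upwards [hYz] with ω hω
        have h1 : ∀ n, (if βh n = 0 then 0 else β n * Y ω n / βh n) = 0 := by
          intro n
          by_cases h : βh n = 0 <;> simp [h, hω n]
        simp [hω, h1]
      apply aux_expGE ((integrable_zero _ _ _).congr hz.symm)
      rw [integral_congr_ae hz]
      simp only [integral_zero, Pi.zero_apply]
      have : ∑ n, β n ≥ 0 := Finset.sum_nonneg fun n _ => hBpos β hβB n
      rw [hβht]
      linarith [hteq]
  -- main case t > 0
  · -- a fully supported element of B̃
    have hstar : ∃ βs ∈ B, (∑ n, βs n = t) ∧ ∀ n, P n → 0 < βs n := by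
      obtain ⟨βt, hβtB, hβts⟩ := hBt
      obtain ⟨n₀, hn₀⟩ := hsupp_exists htpos
      have hN₂ : (0:ℝ) < N₂ := by exact_mod_cast n₀.pos
      have hmem' : ∀ n, ∃ γ, γ ∈ B ∧ (∑ m, γ m = t) ∧ (P n → 0 < γ n) := by
        intro n
        by_cases hn : P n
        · obtain ⟨β₀, hβ₀B, hβ₀n⟩ := hBsupp n hn
          have hsp : 0 < ∑ m, β₀ m := lt_of_lt_of_le hβ₀n
            (Finset.single_le_sum (fun m _ => hBpos β₀ hβ₀B m) (Finset.mem_univ n))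
          obtain ⟨γ, hγB, hγs, hγe⟩ := hscale β₀ hβ₀B hsp t ht0 ht1
          exact ⟨γ, hγB, hγs, fun _ => by
            rw [hγe n]; exact mul_pos (div_pos htpos hsp) hβ₀n⟩
        · exact ⟨βt, hβtB, hβts, fun h => absurd h hn⟩
      choose γf hγfB hγfs hγfpos using hmem'
      have happ : ∀ m, (∑ n, ((N₂:ℝ)⁻¹) • γf n) m = ∑ n, (N₂:ℝ)⁻¹ * γf n m := by
        intro m
        rw [Finset.sum_apply]
        rfl
      refine ⟨∑ n, ((N₂:ℝ)⁻¹) • γf n, ?_, ?_, ?_⟩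
      · refine Convex.sum_mem hBconv (fun _ _ => by positivity) ?_ (fun n _ => hγfB n)
        rw [Finset.sum_const, Finset.card_univ, Fintype.card_fin, nsmul_eq_mul]
        field_simp
      · calc ∑ m, (∑ n, ((N₂:ℝ)⁻¹) • γf n) m = ∑ m, ∑ n, (N₂:ℝ)⁻¹ * γf n m :=
              Finset.sum_congr rfl fun m _ => happ m
          _ = ∑ n, ∑ m, (N₂:ℝ)⁻¹ * γf n m := Finset.sum_comm
          _ = ∑ n : Fin N₂, (N₂:ℝ)⁻¹ * t := by
              refine Finset.sum_congr rfl fun n _ => ?_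
              rw [← Finset.mul_sum, hγfs n]
          _ = t := by
              rw [Finset.sum_const, Finset.card_univ, Fintype.card_fin, nsmul_eq_mul]
              field_simp
      · intro m hPm
        rw [happ m]
        refine Finset.sum_pos' (fun n _ => ?_) ⟨m, Finset.mem_univ m, ?_⟩
        · exact mul_nonneg (by positivity) (hBpos _ (hγfB n) m)
        · exact mul_pos (by positivity) (hγfpos m hPm)
    obtain ⟨βs, hβsB, hβss, hβspos⟩ := hstar
    -- the maximizer is positive on supported coordinates
    have hβhpos : ∀ n, P n → 0 < βh n := by
      by_contra hcon
      push_neg at hcon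
      obtain ⟨n, hPn, hn0⟩ := hcon
      have h0 : βh n = 0 := le_antisymm hn0 (hBpos βh hβhB n)
      have hc := hmax βs hβsB hβss
      rw [if_neg (by
        rintro ⟨m, hm0, hmP⟩
        exact (hβspos m hmP).ne' hm0 : ¬∃ m, βs m = 0 ∧ 0 < μ {ω | 0 < Y ω m}),
        if_pos ⟨n, h0, hPn⟩] at hc
      exact (EReal.coe_ne_bot _) (le_bot_iff.mp hc)
    have hcondβh : ¬ ∃ n, βh n = 0 ∧ 0 < μ {ω | 0 < Y ω n} := by
      rintro ⟨n, h0, hP⟩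
      exact (hβhpos n hP).ne' h0
    -- a.e., coordinates where βh vanishes have Y = 0
    have hYzero' : ∀ᵐ ω ∂μ, ∀ n, βh n = 0 → Y ω n = 0 := by
      filter_upwards [hYzero] with ω h n hn
      exact h n (fun hP => (hβhpos n hP).ne' hn)
    -- the core first-order condition
    have hD3 : ∀ γ ∈ B, (∑ m, γ m = t) → (∀ n, P n → 0 < γ n) →
        ∫ ω, (∑ n, (if βh n = 0 then 0 else (γ n - βh n)/βh n) * Y ω n)/d ω ∂μ ≤ 0 := by
      intro γ hγB hγs hγpos
      have hε0 : ∀ k : ℕ, 0 < (1:ℝ)/(k+2) := fun k => by positivity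
      have hε1 : ∀ k : ℕ, (1:ℝ)/(k+2) ≤ 1/2 := fun k => by
        apply one_div_le_one_div_of_le (by norm_num)
        have : (0:ℝ) ≤ (k:ℝ) := Nat.cast_nonneg k
        linarith
      set ck : ℕ → Fin N₂ → ℝ := fun k n =>
        (Real.log ((1-(1:ℝ)/(k+2))*βh n + (1/(k+2))*γ n) - Real.log (βh n))/((1:ℝ)/(k+2))
        with hck_def
      set f : ℕ → Ω → ℝ := fun k ω => (∑ n, ck k n * Y ω n)/d ω with hf_def
      set cinf : Fin N₂ → ℝ := fun n => if βh n = 0 then 0 else (γ n - βh n)/βh n with hcinf_def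
      have hfint : ∀ k, Integrable (f k) μ := fun k => hcoeff _
      have hFint : Integrable (fun ω => (∑ n, cinf n * Y ω n)/d ω) μ := hcoeff _
      have hmono : ∀ᵐ ω ∂μ, Monotone fun k => f k ω := by
        filter_upwards [hY, hdpos, hYzero] with ω h1 h2 h3
        intro k k' hkk'
        have hterm : ∀ n, ck k n * Y ω n ≤ ck k' n * Y ω n := by
          intro n
          by_cases hPn : P n
          · refine mul_le_mul_of_nonneg_right ?_ (h1 n)
            have hεle : (1:ℝ)/(k'+2) ≤ 1/(k+2) := by
              apply one_div_le_one_div_of_le (by positivity)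
              have := (Nat.cast_le (α := ℝ)).mpr hkk'
              linarith
            exact aux_slope_mono (hβhpos n hPn) (hγpos n hPn) (hε0 k') hεle
              ((hε1 k).trans (by norm_num))
          · rw [h3 n hPn]; simp
        exact div_le_div_of_nonneg_right (Finset.sum_le_sum fun n _ => hterm n) h2.le
      have htend : ∀ᵐ ω ∂μ, Filter.Tendsto (fun k => f k ω) Filter.atTop
          (nhds ((∑ n, cinf n * Y ω n)/d ω)) := by
        filter_upwards [hYzero] with ω h3
        have hre : ∀ k, f k ω = ∑ n, ck k n * (Y ω n / d ω) := by
          intro k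
          rw [hf_def]
          simp only
          rw [Finset.sum_div]
          exact Finset.sum_congr rfl fun n _ => mul_div_assoc _ _ _
        have hreinf : (∑ n, cinf n * Y ω n)/d ω = ∑ n, cinf n * (Y ω n / d ω) := by
          rw [Finset.sum_div]
          exact Finset.sum_congr rfl fun n _ => mul_div_assoc _ _ _
        rw [hreinf]
        refine Filter.Tendsto.congr (fun k => (hre k).symm) ?_
        refine tendsto_finset_sum _ fun n _ => ?_
        by_cases hPn : P n
        · have hder := aux_slope_tendsto (x := βh n) (v := γ n) (hβhpos n hPn)
          have hinf : cinf n = (γ n - βh n)/βh n := by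
            rw [hcinf_def]; simp [(hβhpos n hPn).ne']
          rw [hinf]
          exact hder.mul_const _
        · rw [h3 n hPn]
          simp only [zero_div, mul_zero]
          exact tendsto_const_nhds
      have hint_le : ∀ k, ∫ ω, f k ω ∂μ ≤ 0 := by
        intro k
        set γε : Fin N₂ → ℝ := (1 - (1:ℝ)/(k+2)) • βh + ((1:ℝ)/(k+2)) • γ with hγε_def
        have hγεn : ∀ n, γε n = (1-(1:ℝ)/(k+2))*βh n + (1/(k+2))*γ n := fun n => rfl
        have hγεB : γε ∈ B := hBconv hβhB hγB (by linarith [hε0 k, hε1 k]) (hε0 k).le (by ring)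
        have hγεs : ∑ n, γε n = t := by
          have : ∑ n, γε n = (1-(1:ℝ)/(k+2)) * ∑ n, βh n + (1/(k+2)) * ∑ n, γ n := by
            rw [Finset.mul_sum, Finset.mul_sum, ← Finset.sum_add_distrib]
            exact Finset.sum_congr rfl fun n _ => hγεn n
          rw [this, hβht, hγs]; ring
        have hγεpos : ∀ n, P n → 0 < γε n := by
          intro n hPn
          rw [hγεn n]
          have ha := hβhpos n hPn
          have hb := hγpos n hPn
          have hc := hε0 k
          have hdd := hε1 k
          nlinarith
        have hc := hmax γε hγεB hγεs
        rw [if_neg (by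
            rintro ⟨n, h0, hPn⟩
            exact (hγεpos n hPn).ne' h0), if_neg hcondβh] at hc
        rw [EReal.coe_le_coe_iff] at hc
        have hfe : f k = fun ω => (1/((1:ℝ)/(k+2))) *
            ((∑ n, Real.log (γε n) * Y ω n)/d ω - (∑ n, Real.log (βh n) * Y ω n)/d ω) := by
          funext ω
          rw [hf_def]
          simp only
          have h1 : ∑ n, ck k n * Y ω n = (1/((1:ℝ)/(k+2))) *
              (∑ n, (Real.log (γε n) * Y ω n - Real.log (βh n) * Y ω n)) := by
            rw [Finset.mul_sum]
            refine Finset.sum_congr rfl fun n _ => ?_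
            rw [hck_def, hγεn n]
            have hkne : ((1:ℝ)/(k+2)) ≠ 0 := (hε0 k).ne'
            field_simp
          rw [h1, mul_div_assoc, Finset.sum_sub_distrib, sub_div]
        rw [hfe, integral_const_mul, integral_sub (hcoeff _) (hcoeff _)]
        exact mul_nonpos_of_nonneg_of_nonpos (by positivity) (sub_nonpos.mpr hc)
      have hlim := integral_tendsto_of_tendsto_of_monotone hfint hFint hmono htend
      exact le_of_tendsto hlim (Filter.Eventually.of_forall hint_le)
    have hD34 : ∀ γ ∈ B, (∑ m, γ m = t) →
        ∫ ω, (∑ n, (if βh n = 0 then 0 else (γ n - βh n)/βh n) * Y ω n)/d ω ∂μ ≤ 0 := by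
      intro γ hγB hγs
      have hδ0 : ∀ k : ℕ, 0 < (1:ℝ)/(k+2) := fun k => by positivity
      have hδ1 : ∀ k : ℕ, (1:ℝ)/(k+2) ≤ 1/2 := fun k => by
        apply one_div_le_one_div_of_le (by norm_num)
        have : (0:ℝ) ≤ (k:ℝ) := Nat.cast_nonneg k
        linarith
      set γδ : ℕ → Fin N₂ → ℝ := fun k => (1 - (1:ℝ)/(k+2)) • γ + ((1:ℝ)/(k+2)) • βs
        with hγδ_def
      have hγδn : ∀ k n, γδ k n = (1-(1:ℝ)/(k+2))*γ n + (1/(k+2))*βs n := fun k n => rfl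
      have hγδB : ∀ k, γδ k ∈ B := fun k =>
        hBconv hγB hβsB (by linarith [hδ0 k, hδ1 k]) (hδ0 k).le (by ring)
      have hγδs : ∀ k, ∑ n, γδ k n = t := by
        intro k
        have : ∑ n, γδ k n = (1-(1:ℝ)/(k+2)) * ∑ n, γ n + (1/(k+2)) * ∑ n, βs n := by
          rw [Finset.mul_sum, Finset.mul_sum, ← Finset.sum_add_distrib]
          exact Finset.sum_congr rfl fun n _ => hγδn k n
        rw [this, hγs, hβss]; ring
      have hγδpos : ∀ k n, P n → 0 < γδ k n := by
        intro k n hPn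
        rw [hγδn k n]
        have ha := hBpos γ hγB n
        have hb := hβspos n hPn
        have hc := hδ0 k
        have hdd := hδ1 k
        nlinarith
      have hIk := fun k => hD3 (γδ k) (hγδB k) (hγδs k) (hγδpos k)
      have hsplit : ∀ k, (fun ω => (∑ n, (if βh n = 0 then 0 else (γδ k n - βh n)/βh n)
          * Y ω n)/d ω) = fun ω =>
            (1-(1:ℝ)/(k+2)) * ((∑ n, (if βh n = 0 then 0 else (γ n - βh n)/βh n) * Y ω n)/d ω)
          + (1/(k+2)) * ((∑ n, (if βh n = 0 then 0 else (βs n - βh n)/βh n) * Y ω n)/d ω) := by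
        intro k
        funext ω
        rw [← mul_div_assoc, ← mul_div_assoc, ← add_div, Finset.mul_sum, Finset.mul_sum,
          ← Finset.sum_add_distrib]
        congr 1
        refine Finset.sum_congr rfl fun n _ => ?_
        by_cases h : βh n = 0
        · simp [h]
        · simp only [h, if_false]
          rw [hγδn k n]
          field_simp
          ring
      have hIval : ∀ k : ℕ, (1-(1:ℝ)/(k+2)) *
            (∫ ω, (∑ n, (if βh n = 0 then 0 else (γ n - βh n)/βh n) * Y ω n)/d ω ∂μ)
          + (1/(k+2)) *
            (∫ ω, (∑ n, (if βh n = 0 then 0 else (βs n - βh n)/βh n) * Y ω n)/d ω ∂μ) ≤ 0 := by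
        intro k
        have := hIk k
        rw [hsplit k] at this
        rw [integral_add ((hcoeff _).const_mul _) ((hcoeff _).const_mul _),
          integral_const_mul, integral_const_mul] at this
        exact this
      have htendI : Filter.Tendsto (fun k : ℕ => (1-(1:ℝ)/(k+2)) *
            (∫ ω, (∑ n, (if βh n = 0 then 0 else (γ n - βh n)/βh n) * Y ω n)/d ω ∂μ)
          + (1/(k+2)) *
            (∫ ω, (∑ n, (if βh n = 0 then 0 else (βs n - βh n)/βh n) * Y ω n)/d ω ∂μ))
          Filter.atTop (nhds
            (∫ ω, (∑ n, (if βh n = 0 then 0 else (γ n - βh n)/βh n) * Y ω n)/d ω ∂μ)) := by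
        have h1 := ((tendsto_const_nhds (x := (1:ℝ))).sub aux_eps_tendsto).mul
          (tendsto_const_nhds (x := ∫ ω, (∑ n, (if βh n = 0 then 0 else (γ n - βh n)/βh n)
            * Y ω n)/d ω ∂μ))
        have h2 := aux_eps_tendsto.mul
          (tendsto_const_nhds (x := ∫ ω, (∑ n, (if βh n = 0 then 0 else (βs n - βh n)/βh n)
            * Y ω n)/d ω ∂μ))
        have := h1.add h2
        simpa using this
      exact le_of_tendsto htendI (Filter.Eventually.of_forall hIval)
    -- conclusion for a given β
    set s : ℝ := ∑ n, β n with hs_def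
    have hs0 : 0 ≤ s := Finset.sum_nonneg fun n _ => hBpos β hβB n
    rcases eq_or_lt_of_le hs0 with hseq | hspos
    · -- β = 0
      have hβz : ∀ n, β n = 0 := by
        intro n
        exact (Finset.sum_eq_zero_iff_of_nonneg (fun m _ => hBpos β hβB m)).mp hseq.symm n
          (Finset.mem_univ n)
      constructor
      · left
        obtain ⟨n, hn⟩ := hsupp_exists htpos
        exact ⟨n, hβz n, hn⟩
      · have hfe : (fun ω => ((∑ n, |Y ω n|) -
            ∑ n, (if βh n = 0 then 0 else β n * Y ω n / βh n)) / d ω) = R := by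
          funext ω
          have h1 : ∀ n, (if βh n = 0 then 0 else β n * Y ω n / βh n) = 0 := by
            intro n
            by_cases h : βh n = 0 <;> simp [h, hβz n]
          simp [hR_def, h1]
        rw [hfe]
        apply aux_expGE hRint
        rw [hRval, hβht]
        linarith
    · -- β has positive total mass
      -- u n = β n / βh n (0 if βh n = 0), en = 1 on the support of βh
      set u : Fin N₂ → ℝ := fun n => if βh n = 0 then 0 else β n / βh n with hu_def
      set en : Fin N₂ → ℝ := fun n => if βh n = 0 then 0 else 1 with hen_def
      have hIen : ∫ ω, (∑ n, en n * Y ω n)/d ω ∂μ = t := by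
        have hae : (fun ω => (∑ n, en n * Y ω n)/d ω) =ᵐ[μ] R := by
          filter_upwards [hYzero', hY] with ω h1 h2
          have : ∀ n, en n * Y ω n = |Y ω n| := by
            intro n
            rw [hen_def]
            by_cases h : βh n = 0
            · simp [h, h1 n h]
            · simp [h, abs_of_nonneg (h2 n)]
          have h4 : (∑ n, en n * Y ω n) = ∑ n, |Y ω n| :=
            Finset.sum_congr rfl fun n _ => this n
          rw [h4, hR_def]
        rw [integral_congr_ae hae, hRval]
      -- apply the first-order condition to the scaled β
      have hIu : ∫ ω, (∑ n, u n * Y ω n)/d ω ∂μ ≤ s := by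
        have hts : 0 < t/s := div_pos htpos hspos
        have hmem : (t/s) • β ∈ B := by
          refine hBcone β hβB (t/s) hts.le ?_
          rw [← hs_def, div_mul_cancel₀ _ (ne_of_gt hspos)]
          exact ht1
        have hsum : ∑ n, ((t/s) • β) n = t := by
          have h1 : ∑ n, ((t/s) • β) n = (t/s) * ∑ n, β n := by
            rw [Finset.mul_sum]; rfl
          rw [h1, ← hs_def, div_mul_cancel₀ _ (ne_of_gt hspos)]
        have hI := hD34 ((t/s) • β) hmem hsum
        have hid : ∀ n, (if βh n = 0 then 0 else (((t/s) • β) n - βh n)/βh n)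
            = (t/s) * u n - en n := by
          intro n
          rw [hu_def, hen_def]
          by_cases h : βh n = 0
          · simp [h]
          · simp only [h, if_false]
            have : ((t/s) • β) n = (t/s) * β n := rfl
            rw [this]
            field_simp
        have hre : (fun ω => (∑ n, (if βh n = 0 then 0 else (((t/s) • β) n - βh n)/βh n)
            * Y ω n)/d ω) = fun ω =>
            (t/s) * ((∑ n, u n * Y ω n)/d ω) - (∑ n, en n * Y ω n)/d ω := by
          funext ω
          rw [← mul_div_assoc, ← sub_div, Finset.mul_sum, ← Finset.sum_sub_distrib]
          congr 1
          refine Finset.sum_congr rfl fun n _ => ?_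
          rw [hid n]
          ring
        rw [hre, integral_sub ((hcoeff _).const_mul _) (hcoeff _),
          integral_const_mul, hIen] at hI
        have h2 : (t/s) * (∫ ω, (∑ n, u n * Y ω n)/d ω ∂μ) ≤ (t/s) * s := by
          rw [div_mul_cancel₀ _ (ne_of_gt hspos)]
          linarith
        exact le_of_mul_le_mul_left h2 hts
      have hfi2 : Integrable (fun ω => R ω - (∑ n, u n * Y ω n)/d ω) μ :=
        hRint.sub (hcoeff u)
      have hI2 : t - s ≤ ∫ ω, (R ω - (∑ n, u n * Y ω n)/d ω) ∂μ := by
        rw [integral_sub hRint (hcoeff u), hRval]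
        linarith
      constructor
      · -- part (i)
        by_cases hcond : ∃ n, β n = 0 ∧ 0 < μ {ω | 0 < Y ω n}
        · exact Or.inl hcond
        · right
          push_neg at hcond
          have hβpos : ∀ n, P n → 0 < β n := by
            intro n hPn
            rcases lt_or_eq_of_le (hBpos β hβB n) with h | h
            · exact h
            · exact absurd (hcond n h.symm) (not_le.mpr hPn)
          have hf1i : Integrable
              (fun ω => (∑ n, (Real.log (βh n) - Real.log (β n)) * Y ω n) / d ω) μ :=
            hcoeff _
          apply aux_expGE hf1i
          have hmono : (fun ω => R ω - (∑ n, u n * Y ω n)/d ω) ≤ᵐ[μ]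
              (fun ω => (∑ n, (Real.log (βh n) - Real.log (β n)) * Y ω n) / d ω) := by
            filter_upwards [hY, hdpos, hYzero] with ω h1 h2 h3
            have hterm : ∀ n, (1 - u n) * Y ω n ≤
                (Real.log (βh n) - Real.log (β n)) * Y ω n := by
              intro n
              by_cases hPn : P n
              · have hβh := hβhpos n hPn
                have hβn := hβpos n hPn
                have hu : u n = β n / βh n := by rw [hu_def]; simp [hβh.ne']
                have hlog : Real.log (β n / βh n) ≤ β n / βh n - 1 :=
                  Real.log_le_sub_one_of_pos (div_pos hβn hβh)
                rw [Real.log_div hβn.ne' hβh.ne'] at hlog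
                have : 1 - u n ≤ Real.log (βh n) - Real.log (β n) := by
                  rw [hu]; linarith
                exact mul_le_mul_of_nonneg_right this (h1 n)
              · rw [h3 n hPn]; ring_nf; exact le_rfl
            have hsum : ∑ n, (1 - u n) * Y ω n ≤
                ∑ n, (Real.log (βh n) - Real.log (β n)) * Y ω n :=
              Finset.sum_le_sum fun n _ => hterm n
            have e1 : ∑ n, (1 - u n) * Y ω n = (∑ n, |Y ω n|) - ∑ n, u n * Y ω n := by
              rw [show (∑ n, |Y ω n|) = ∑ n, Y ω n from
                Finset.sum_congr rfl fun n _ => abs_of_nonneg (h1 n), ← Finset.sum_sub_distrib]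
              exact Finset.sum_congr rfl fun n _ => by ring
            have hlhs : R ω - (∑ n, u n * Y ω n)/d ω = (∑ n, (1 - u n) * Y ω n)/d ω := by
              rw [e1, sub_div]
            rw [hlhs]
            exact div_le_div_of_nonneg_right hsum h2.le
          have := integral_mono_ae hfi2 hf1i hmono
          rw [hβht]
          linarith
      · -- part (ii)
        have hfe : (fun ω => ((∑ n, |Y ω n|) -
            ∑ n, (if βh n = 0 then 0 else β n * Y ω n / βh n)) / d ω) =
            fun ω => R ω - (∑ n, u n * Y ω n)/d ω := by
          funext ω
          have h1 : ∀ n, (if βh n = 0 then 0 else β n * Y ω n / βh n) = u n * Y ω n := by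
            intro n
            rw [hu_def]
            by_cases h : βh n = 0
            · simp [h]
            · simp only [h, if_false]
              rw [div_mul_eq_mul_div]
          simp only [hR_def]
          rw [← sub_div,
            show (∑ n, (if βh n = 0 then 0 else β n * Y ω n / βh n)) = ∑ n, u n * Y ω n from
              Finset.sum_congr rfl fun n _ => h1 n]
        rw [hfe]
        apply aux_expGE hfi2
        rw [hβht]
        exact hI2
end

section
/- Let (Ω′,𝒜,μ) be a probability space and R, R̂ : Ω′ → (0,∞) measurable functions such that R/R̂ is integrable with E_μ[R/R̂] ≤ 1 and ln R̂ is integrable. Then (ln R)⁺ is integrable, so E_μ[ln R] is well-defined with values in [−∞,∞), and E_μ[ln R] ≤ E_μ[ln R̂]. -/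
open MeasureTheory

/-- The Jensen-inequality step of the paper (used for relation (numeraire-2) of
Theorem 2): if `R, R̂ > 0`, `E[R/R̂] ≤ 1` with `R/R̂` integrable, and `ln R̂` is
integrable, then `(ln R)⁺` is integrable (equivalently, `∫⁻ (ln R)⁺ < ∞`), so that
`E[ln R] = ∫⁻(ln R)⁺ − ∫⁻(ln R)⁻` is well-defined with values in `[−∞,∞)`, and
`E[ln R] ≤ E[ln R̂]`; the last inequality is encoded in the extended sense as
`∫⁻(ln R)⁺ + (E[ln R̂])⁻ ≤ ∫⁻(ln R)⁻ + (E[ln R̂])⁺`. -/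
theorem log_expectation_le_of_ratio_expectation_le_one
    {Ω : Type*} [MeasurableSpace Ω] (μ : Measure Ω) [IsProbabilityMeasure μ]
    (R Rh : Ω → ℝ) (hRm : Measurable R) (hRhm : Measurable Rh)
    (hRpos : ∀ ω, 0 < R ω) (hRhpos : ∀ ω, 0 < Rh ω)
    (hratio_int : Integrable (fun ω => R ω / Rh ω) μ)
    (hratio : ∫ ω, R ω / Rh ω ∂μ ≤ 1)
    (hlogRh : Integrable (fun ω => Real.log (Rh ω)) μ) :
    Integrable (fun ω => max (Real.log (R ω)) 0) μ ∧
    (∫⁻ ω, ENNReal.ofReal (Real.log (R ω)) ∂μ) < ⊤ ∧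
    (∫⁻ ω, ENNReal.ofReal (Real.log (R ω)) ∂μ) +
        ENNReal.ofReal (-(∫ ω, Real.log (Rh ω) ∂μ)) ≤
      (∫⁻ ω, ENNReal.ofReal (-Real.log (R ω)) ∂μ) +
        ENNReal.ofReal (∫ ω, Real.log (Rh ω) ∂μ) := by
  set f : Ω → ℝ := fun ω => Real.log (R ω) with hf
  set g : Ω → ℝ := fun ω => Real.log (Rh ω) with hg
  set q : Ω → ℝ := fun ω => R ω / Rh ω with hq
  have hfm : Measurable f := hRm.log
  have hpt : ∀ ω, f ω ≤ g ω + (q ω - 1) := by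
    intro ω
    have h1 : Real.log (q ω) ≤ q ω - 1 :=
      Real.log_le_sub_one_of_pos (div_pos (hRpos ω) (hRhpos ω))
    have h2 : Real.log (q ω) = f ω - g ω :=
      Real.log_div (hRpos ω).ne' (hRhpos ω).ne'
    linarith
  -- integrable bound
  have hq1 : Integrable (fun ω => q ω - 1) μ := hratio_int.sub (integrable_const 1)
  have hofmax : ∀ x : ℝ, ENNReal.ofReal (max x 0) = ENNReal.ofReal x := by
    intro x
    rcases le_total 0 x with h | h
    · rw [max_eq_left h]
    · rw [max_eq_right h, ENNReal.ofReal_of_nonpos h, ENNReal.ofReal_zero]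
  have hbound : Integrable (fun ω => |g ω| + |q ω - 1|) μ :=
    hlogRh.abs.add hq1.abs
  have hmax_int : Integrable (fun ω => max (f ω) 0) μ := by
    refine hbound.mono (hfm.max measurable_const).aestronglyMeasurable
      (Filter.Eventually.of_forall fun ω => ?_)
    have h0 : max (f ω) 0 ≤ |g ω| + |q ω - 1| := by
      rcases le_or_gt (f ω) 0 with h | h
      · simp [max_eq_right h]; positivity
      · have := hpt ω
        calc max (f ω) 0 = f ω := max_eq_left h.le
          _ ≤ g ω + (q ω - 1) := this
          _ ≤ |g ω| + |q ω - 1| := add_le_add (le_abs_self _) (le_abs_self _)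
    simpa [abs_of_nonneg (le_max_right (f ω) 0), Real.norm_eq_abs,
      abs_of_nonneg (by positivity : (0:ℝ) ≤ |g ω| + |q ω - 1|)] using h0
  have hA : (∫⁻ ω, ENNReal.ofReal (f ω) ∂μ) < ⊤ := by
    have h := hmax_int.lintegral_lt_top
    simpa only [hofmax] using h
  refine ⟨hmax_int, hA, ?_⟩
  by_cases hB : (∫⁻ ω, ENNReal.ofReal (-f ω) ∂μ) = ⊤
  · rw [hB]; simp
  -- f is integrable
  have hneg_int : Integrable (fun ω => max (-f ω) 0) μ := by
    have hnt : (∫⁻ ω, ENNReal.ofReal (max (-f ω) 0) ∂μ) ≠ ⊤ := by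
      simpa only [hofmax] using hB
    exact (lintegral_ofReal_ne_top_iff_integrable
      ((hfm.neg.max measurable_const).aestronglyMeasurable)
      (Filter.Eventually.of_forall fun ω => le_max_right _ _)).1 hnt
  have hf_int : Integrable f μ := by
    have heq : f = fun ω => max (f ω) 0 - max (-f ω) 0 := by
      funext ω
      rcases le_total (f ω) 0 with h | h
      · rw [max_eq_right h, max_eq_left (neg_nonneg.2 h)]; ring
      · rw [max_eq_left h, max_eq_right (neg_nonpos.2 h)]; ring
    rw [heq]; exact hmax_int.sub hneg_int
  -- integral inequality in ℝ
  have hint_le : ∫ ω, f ω ∂μ ≤ ∫ ω, g ω ∂μ := by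
    have h1 : ∫ ω, f ω ∂μ ≤ ∫ ω, (g ω + (q ω - 1)) ∂μ :=
      integral_mono hf_int (hlogRh.add hq1) hpt
    have h2 : ∫ ω, (g ω + (q ω - 1)) ∂μ = (∫ ω, g ω ∂μ) + ((∫ ω, q ω ∂μ) - 1) := by
      rw [integral_add hlogRh hq1, integral_sub hratio_int (integrable_const 1)]
      simp
    have h3 : (∫ ω, q ω ∂μ) - 1 ≤ 0 := by simpa using hratio
    linarith
  -- convert to the ENNReal statement
  have hrepr := integral_eq_lintegral_pos_part_sub_lintegral_neg_part hf_int
  set A := ∫⁻ ω, ENNReal.ofReal (f ω) ∂μ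
  set B := ∫⁻ ω, ENNReal.ofReal (-f ω) ∂μ
  set c := ∫ ω, g ω ∂μ
  have hBlt : B < ⊤ := lt_top_iff_ne_top.2 hB
  have hAeq : A = ENNReal.ofReal A.toReal := (ENNReal.ofReal_toReal hA.ne).symm
  have hBeq : B = ENNReal.ofReal B.toReal := (ENNReal.ofReal_toReal hB).symm
  have hofneg : ENNReal.ofReal (-c) = ENNReal.ofReal (max (-c) 0) := by
    rcases le_total 0 (-c) with h | h
    · rw [max_eq_left h]
    · rw [max_eq_right h, ENNReal.ofReal_of_nonpos h, ENNReal.ofReal_zero]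
  have hofc : ENNReal.ofReal c = ENNReal.ofReal (max c 0) := by
    rcases le_total 0 c with h | h
    · rw [max_eq_left h]
    · rw [max_eq_right h, ENNReal.ofReal_of_nonpos h, ENNReal.ofReal_zero]
  rw [hAeq, hBeq, hofneg, hofc,
    ← ENNReal.ofReal_add ENNReal.toReal_nonneg (le_max_right _ _),
    ← ENNReal.ofReal_add ENNReal.toReal_nonneg (le_max_right _ _)]
  apply ENNReal.ofReal_le_ofReal
  have hmaxc : max c 0 - max (-c) 0 = c := by
    rcases le_total 0 c with h | h
    · rw [max_eq_left h, max_eq_right (neg_nonpos.2 h)]; ring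
    · rw [max_eq_right h, max_eq_left (neg_nonneg.2 h)]; ring
  linarith [hrepr, hint_le]
end

section
/- In the one-period market setting, let α̂ ∈ ℝ^{N₁} satisfy ⟨e,α̂⟩ ∈ [0,1], μ(d > 0) = 1 where d = ⟨α̂,X⟩W + |Y|, and E_μ[⟨α̂,X⟩W/d] = ⟨e,α̂⟩. Define β̂ ∈ ℝ₊^{N₂} by β̂^n = E_μ[Y^n/d] for n = 1,…,N₂. Then |β̂| = 1 − ⟨e,α̂⟩, and for every β ∈ ℝ₊^{N₂} with |β| = 1 − ⟨e,α̂⟩ one has E_μ[⟨ln β, Y⟩/d] ≤ E_μ[⟨ln β̂, Y⟩/d]. -/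
open MeasureTheory
open scoped BigOperators

lemma gibbs_term (p q : ℝ) (hp : 0 ≤ p) (hq : 0 ≤ q) (h0 : q = 0 → p = 0) :
    p * Real.log q ≤ p * Real.log p + (q - p) := by
  rcases eq_or_lt_of_le hp with h | h
  · simp [← h, hq]
  · have hq' : 0 < q := lt_of_le_of_ne hq fun h' => h.ne' (h0 h'.symm)
    have h1 := Real.log_le_sub_one_of_pos (show 0 < q / p from div_pos hq' h)
    rw [Real.log_div hq'.ne' h.ne'] at h1
    have h2 : p * (Real.log q - Real.log p) ≤ p * (q / p - 1) :=
      mul_le_mul_of_nonneg_left h1 hp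
    have h3 : p * (q / p - 1) = q - p := by field_simp
    nlinarith [h2, h3]

/-- The paper's explicit formula (beta-explicit) for the endogenous-asset component of
the relative growth optimal strategy when there are no portfolio constraints on the
endogenous assets: with `d = ⟨α̂,X⟩W + |Y|`, the vector `β̂^n = E[Y^n/d]` satisfies
`|β̂| = 1 − ⟨e,α̂⟩` and maximizes `β ↦ E[⟨ln β, Y⟩/d]` over all `β ∈ ℝ₊^{N₂}` with
`|β| = 1 − ⟨e,α̂⟩` (for `β` having a zero coordinate `n` with `μ(Y^n > 0) > 0`, the
value of the functional is `−∞` by the convention `a·ln 0 = −∞`, and the claim holds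
trivially). -/
theorem beta_explicit_formula
    {N₁ N₂ : ℕ} {Ω : Type*} [MeasurableSpace Ω] (μ : Measure Ω) [IsProbabilityMeasure μ]
    (X : Ω → Fin N₁ → ℝ) (Y : Ω → Fin N₂ → ℝ) (hXm : Measurable X) (hYm : Measurable Y)
    (hX : ∀ᵐ ω ∂μ, ∀ n, 0 < X ω n) (hY : ∀ᵐ ω ∂μ, ∀ n, 0 ≤ Y ω n)
    (W : ℝ) (hW : 0 < W)
    (αh : Fin N₁ → ℝ) (hαh0 : 0 ≤ ∑ n, αh n) (hαh1 : ∑ n, αh n ≤ 1)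
    (d : Ω → ℝ) (hd : ∀ ω, d ω = dotp αh (X ω) * W + ∑ n, |Y ω n|)
    (hdpos : ∀ᵐ ω ∂μ, 0 < d ω)
    (hint : Integrable (fun ω => dotp αh (X ω) * W / d ω) μ)
    (heq : ∫ ω, dotp αh (X ω) * W / d ω ∂μ = ∑ n, αh n)
    (βh : Fin N₂ → ℝ) (hβh : ∀ n, βh n = ∫ ω, Y ω n / d ω ∂μ) :
    (∑ n, βh n = 1 - ∑ n, αh n) ∧
    (∀ β : Fin N₂ → ℝ, (∀ n, 0 ≤ β n) → ∑ n, β n = 1 - ∑ n, αh n →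
      (∃ n, β n = 0 ∧ 0 < μ {ω | 0 < Y ω n}) ∨
        ∫ ω, (∑ n, Real.log (β n) * Y ω n) / d ω ∂μ ≤
          ∫ ω, (∑ n, Real.log (βh n) * Y ω n) / d ω ∂μ) := by
  classical
  -- measurability of d
  have hdm : Measurable d := by
    have : d = fun ω => dotp αh (X ω) * W + ∑ n, |Y ω n| := funext hd
    rw [this]
    apply Measurable.add
    · apply Measurable.mul _ measurable_const
      unfold dotp
      exact Finset.measurable_sum _ fun n _ =>
        measurable_const.mul ((measurable_pi_apply n).comp hXm)
    · exact Finset.measurable_sum _ fun n _ =>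
        ((measurable_pi_apply n).comp hYm).abs
  have hYnm : ∀ n : Fin N₂, Measurable fun ω => Y ω n := fun n =>
    (measurable_pi_apply n).comp hYm
  set g : Ω → ℝ := fun ω => 1 - dotp αh (X ω) * W / d ω with hg
  have hg_int : Integrable g μ := (integrable_const 1).sub hint
  have hsum_ae : ∀ᵐ ω ∂μ, ∑ n, Y ω n / d ω = g ω := by
    filter_upwards [hY, hdpos] with ω hYω hdω
    have hs : ∑ n, |Y ω n| = ∑ n, Y ω n :=
      Finset.sum_congr rfl fun n _ => abs_of_nonneg (hYω n)
    have h1 : ∑ n, Y ω n = d ω - dotp αh (X ω) * W := by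
      rw [hd ω, hs]; ring
    rw [← Finset.sum_div, h1, sub_div, div_self hdω.ne']
  have hYd_int : ∀ n, Integrable (fun ω => Y ω n / d ω) μ := by
    intro n
    apply hg_int.mono ((hYnm n).div hdm).aestronglyMeasurable
    filter_upwards [hY, hdpos, hsum_ae] with ω hYω hdω hsω
    have h1 : 0 ≤ Y ω n / d ω := div_nonneg (hYω n) hdω.le
    have h2 : Y ω n / d ω ≤ g ω := by
      rw [← hsω]
      exact Finset.single_le_sum (fun m _ => div_nonneg (hYω m) hdω.le) (Finset.mem_univ n)
    rw [Real.norm_eq_abs, Real.norm_eq_abs, show ((fun ω => Y ω n) / d) ω = Y ω n / d ω from rfl, abs_of_nonneg h1]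
    exact h2.trans (le_abs_self _)
  have hβh_nonneg : ∀ n, 0 ≤ βh n := by
    intro n
    rw [hβh n]
    apply integral_nonneg_of_ae
    filter_upwards [hY, hdpos] with ω hYω hdω
    exact div_nonneg (hYω n) hdω.le
  have hsum : ∑ n, βh n = 1 - ∑ n, αh n := by
    have h1 : ∑ n, βh n = ∫ ω, ∑ n, Y ω n / d ω ∂μ := by
      rw [integral_finset_sum _ fun n _ => hYd_int n]
      exact Finset.sum_congr rfl fun n _ => hβh n
    rw [h1, integral_congr_ae hsum_ae]
    have := integral_sub (integrable_const (1 : ℝ)) hint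
    simp only [hg]
    rw [this, integral_const, heq]
    simp
  refine ⟨hsum, ?_⟩
  intro β hβ0 hβsum
  by_cases hzero : ∃ n, β n = 0 ∧ 0 < μ {ω | 0 < Y ω n}
  · exact Or.inl hzero
  · right
    push_neg at hzero
    have hb0 : ∀ n, β n = 0 → βh n = 0 := by
      intro n hn
      have hμ0 : μ {ω | 0 < Y ω n} = 0 :=
        le_antisymm (hzero n hn) zero_le
      have hae : ∀ᵐ ω ∂μ, Y ω n = 0 := by
        have hn' : ∀ᵐ ω ∂μ, ¬ (0 < Y ω n) := by
          rw [ae_iff]; simpa using hμ0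
        filter_upwards [hn', hY] with ω h1 h2
        exact le_antisymm (not_lt.mp h1) (h2 n)
      rw [hβh n]
      rw [integral_congr_ae (g := fun _ => (0 : ℝ)) (by
        filter_upwards [hae] with ω h; rw [h, zero_div])]
      simp
    have hrw : ∀ c : Fin N₂ → ℝ,
        ∫ ω, (∑ n, Real.log (c n) * Y ω n) / d ω ∂μ = ∑ n, Real.log (c n) * βh n := by
      intro c
      have heq1 : ∀ ω, (∑ n, Real.log (c n) * Y ω n) / d ω
          = ∑ n, Real.log (c n) * (Y ω n / d ω) := by
        intro ω
        rw [Finset.sum_div]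
        exact Finset.sum_congr rfl fun n _ => mul_div_assoc _ _ _
      simp_rw [heq1]
      rw [integral_finset_sum _ fun n _ => (hYd_int n).const_mul _]
      exact Finset.sum_congr rfl fun n _ => by rw [integral_const_mul, ← hβh n]
    rw [hrw β, hrw βh]
    have hterm : ∀ n ∈ Finset.univ, Real.log (β n) * βh n
        ≤ Real.log (βh n) * βh n + (β n - βh n) := by
      intro n _
      have := gibbs_term (βh n) (β n) (hβh_nonneg n) (hβ0 n) (hb0 n)
      nlinarith [this]
    calc ∑ n, Real.log (β n) * βh n
        ≤ ∑ n, (Real.log (βh n) * βh n + (β n - βh n)) := Finset.sum_le_sum hterm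
      _ = ∑ n, Real.log (βh n) * βh n := by
          rw [Finset.sum_add_distrib, Finset.sum_sub_distrib, hβsum, hsum]
          ring
end

section
/- Let (Ω′,𝒜,μ) be a probability space, X : Ω′ → (0,∞) and Y : Ω′ → [0,∞) measurable, and W > 0 a real number. Define φ(α) = E_μ[XW/(αXW + Y)] for α ∈ (0,1], and let E_μ[XW/Y] ∈ (0,∞] be computed with the convention c/0 = +∞ for c > 0. Then: (i) if E_μ[XW/Y] ≤ 1, then φ(α) < 1 for every α ∈ (0,1]; and (ii) if E_μ[XW/Y] > 1, then there exists a unique α ∈ (0,1] with φ(α) = 1. -/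
open MeasureTheory
open scoped ENNReal

section Aux

variable {Ω : Type*} [MeasurableSpace Ω] {μ : Measure Ω} [IsProbabilityMeasure μ]
variable {f g : Ω → ℝ}

namespace SingleAssetAux

/-- positivity of the denominator -/
lemma denom_pos (hf : ∀ ω, 0 < f ω) (hg : ∀ ω, 0 ≤ g ω) {a : ℝ} (ha : 0 < a) (ω : Ω) :
    0 < a * f ω + g ω :=
  add_pos_of_pos_of_nonneg (mul_pos ha (hf ω)) (hg ω)

lemma F_nonneg (hf : ∀ ω, 0 < f ω) (hg : ∀ ω, 0 ≤ g ω) {a : ℝ} (ha : 0 < a) (ω : Ω) :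
    0 ≤ f ω / (a * f ω + g ω) :=
  div_nonneg (hf ω).le (denom_pos hf hg ha ω).le

lemma F_le (hf : ∀ ω, 0 < f ω) (hg : ∀ ω, 0 ≤ g ω) {a : ℝ} (ha : 0 < a) (ω : Ω) :
    f ω / (a * f ω + g ω) ≤ 1 / a := by
  rw [div_le_div_iff₀ (denom_pos hf hg ha ω) ha]
  have := mul_pos ha (hf ω)
  nlinarith [hg ω, hf ω]

lemma F_strict_anti (hf : ∀ ω, 0 < f ω) (hg : ∀ ω, 0 ≤ g ω) {a b : ℝ} (ha : 0 < a)
    (hab : a < b) (ω : Ω) :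
    f ω / (b * f ω + g ω) < f ω / (a * f ω + g ω) :=
  div_lt_div_of_pos_left (hf ω) (denom_pos hf hg ha ω)
    (by nlinarith [hf ω, hg ω])

lemma F_meas (hfm : Measurable f) (hgm : Measurable g) (a : ℝ) :
    Measurable (fun ω => f ω / (a * f ω + g ω)) :=
  hfm.div ((hfm.const_mul a).add hgm)

lemma F_integrable (hfm : Measurable f) (hgm : Measurable g)
    (hf : ∀ ω, 0 < f ω) (hg : ∀ ω, 0 ≤ g ω) {a : ℝ} (ha : 0 < a) :
    Integrable (fun ω => f ω / (a * f ω + g ω)) μ := by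
  refine Integrable.mono' (integrable_const (1 / a)) (F_meas hfm hgm a).aestronglyMeasurable
    (Filter.Eventually.of_forall fun ω => ?_)
  rw [Real.norm_eq_abs, abs_of_nonneg (F_nonneg hf hg ha ω)]
  exact F_le hf hg ha ω

lemma ofReal_integral (hfm : Measurable f) (hgm : Measurable g)
    (hf : ∀ ω, 0 < f ω) (hg : ∀ ω, 0 ≤ g ω) {a : ℝ} (ha : 0 < a) :
    ENNReal.ofReal (∫ ω, f ω / (a * f ω + g ω) ∂μ)
      = ∫⁻ ω, ENNReal.ofReal (f ω / (a * f ω + g ω)) ∂μ :=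
  MeasureTheory.ofReal_integral_eq_lintegral_ofReal (F_integrable hfm hgm hf hg ha)
    (Filter.Eventually.of_forall fun ω => F_nonneg hf hg ha ω)

lemma lint_ne_top (hfm : Measurable f) (hgm : Measurable g)
    (hf : ∀ ω, 0 < f ω) (hg : ∀ ω, 0 ≤ g ω) {a : ℝ} (ha : 0 < a) :
    (∫⁻ ω, ENNReal.ofReal (f ω / (a * f ω + g ω)) ∂μ) ≠ ∞ := by
  rw [← ofReal_integral hfm hgm hf hg ha]
  exact ENNReal.ofReal_ne_top

/-- pointwise bound by the `ℝ≥0∞`-valued ratio `f/g` (with `c/0 = ∞`), strict. -/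
lemma F_lt_ratio (hf : ∀ ω, 0 < f ω) (hg : ∀ ω, 0 ≤ g ω) {a : ℝ} (ha : 0 < a) (ω : Ω) :
    ENNReal.ofReal (f ω / (a * f ω + g ω))
      < ENNReal.ofReal (f ω) / ENNReal.ofReal (g ω) := by
  rcases eq_or_lt_of_le (hg ω) with h0 | h0
  · rw [← h0, ENNReal.ofReal_zero, ENNReal.div_zero (by simpa using (hf ω))]
    exact ENNReal.ofReal_lt_top
  · rw [← ENNReal.ofReal_div_of_pos h0]
    refine (ENNReal.ofReal_lt_ofReal_iff (div_pos (hf ω) h0)).2 ?_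
    exact div_lt_div_of_pos_left (hf ω) h0 (by nlinarith [mul_pos ha (hf ω)])

lemma phi_strictAnti (hfm : Measurable f) (hgm : Measurable g)
    (hf : ∀ ω, 0 < f ω) (hg : ∀ ω, 0 ≤ g ω) {a b : ℝ} (ha : 0 < a) (hab : a < b) :
    (∫ ω, f ω / (b * f ω + g ω) ∂μ) < ∫ ω, f ω / (a * f ω + g ω) ∂μ := by
  have hb : 0 < b := ha.trans hab
  have hia := F_integrable (μ := μ) hfm hgm hf hg ha
  have hib := F_integrable (μ := μ) hfm hgm hf hg hb
  have key : 0 < ∫ ω, (f ω / (a * f ω + g ω) - f ω / (b * f ω + g ω)) ∂μ := by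
    rw [integral_pos_iff_support_of_nonneg_ae]
    · have : Function.support (fun ω => f ω / (a * f ω + g ω) - f ω / (b * f ω + g ω))
          = Set.univ := by
        ext ω
        simp only [Function.mem_support, Set.mem_univ, iff_true]
        exact ne_of_gt (sub_pos.2 (F_strict_anti hf hg ha hab ω))
      rw [this]
      simp
    · exact Filter.Eventually.of_forall fun ω =>
        sub_nonneg.2 (F_strict_anti hf hg ha hab ω).le
    · exact hia.sub hib
  rw [integral_sub hia hib] at key
  linarith

lemma phi_continuousAt (hfm : Measurable f) (hgm : Measurable g)
    (hf : ∀ ω, 0 < f ω) (hg : ∀ ω, 0 ≤ g ω) {a₀ : ℝ} (ha₀ : 0 < a₀) :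
    ContinuousAt (fun a => ∫ ω, f ω / (a * f ω + g ω) ∂μ) a₀ := by
  have hnhds : Set.Ioi (a₀ / 2) ∈ nhds a₀ := Ioi_mem_nhds (by linarith)
  refine continuousAt_of_dominated (bound := fun _ => 1 / (a₀ / 2))
    (Filter.eventually_of_mem hnhds fun a _ => (F_meas hfm hgm a).aestronglyMeasurable) ?_
    (integrable_const _) ?_
  · refine Filter.eventually_of_mem hnhds fun a (haa : a₀ / 2 < a) => ?_
    refine Filter.Eventually.of_forall fun ω => ?_
    have ha : 0 < a := lt_trans (by linarith) haa
    rw [Real.norm_eq_abs, abs_of_nonneg (F_nonneg hf hg ha ω)]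
    calc f ω / (a * f ω + g ω) ≤ 1 / a := F_le hf hg ha ω
      _ ≤ 1 / (a₀ / 2) := by
          apply one_div_le_one_div_of_le (by linarith) haa.le
  · refine Filter.Eventually.of_forall fun ω => ?_
    have hd : a₀ * f ω + g ω ≠ 0 := (denom_pos hf hg ha₀ ω).ne'
    exact (continuousAt_const.div
      (((continuous_id.mul continuous_const).add continuous_const).continuousAt) hd)

/-- monotone convergence as `a ↓ 0`: the sup of the lintegrals is `∫⁻ f/g`. -/
lemma lintegral_sup (hfm : Measurable f) (hgm : Measurable g)
    (hf : ∀ ω, 0 < f ω) (hg : ∀ ω, 0 ≤ g ω) :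
    (⨆ n : ℕ, ∫⁻ ω, ENNReal.ofReal (f ω / ((1 / (n + 1)) * f ω + g ω)) ∂μ)
      = ∫⁻ ω, ENNReal.ofReal (f ω) / ENNReal.ofReal (g ω) ∂μ := by
  have hpos : ∀ n : ℕ, (0:ℝ) < 1 / (n + 1) := fun n => by positivity
  have hmono : ∀ ω, Monotone (fun n : ℕ => ENNReal.ofReal (f ω / ((1 / (n + 1)) * f ω + g ω))) := by
    intro ω m n hmn
    apply ENNReal.ofReal_le_ofReal
    rcases eq_or_lt_of_le hmn with rfl | h
    · exact le_rfl
    · refine (F_strict_anti hf hg (hpos n) ?_ ω).le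
      apply one_div_lt_one_div_of_lt (by positivity)
      have : (m:ℝ) < n := by exact_mod_cast h
      linarith
  have hsup : ∀ ω, (⨆ n : ℕ, ENNReal.ofReal (f ω / ((1 / (n + 1)) * f ω + g ω)))
      = ENNReal.ofReal (f ω) / ENNReal.ofReal (g ω) := by
    intro ω
    refine iSup_eq_of_tendsto (hmono ω) ?_
    rcases eq_or_lt_of_le (hg ω) with h0 | h0
    · -- g ω = 0 : values are (n+1), tendsto ⊤
      have hval : ∀ n : ℕ, f ω / ((1 / (n + 1)) * f ω + g ω) = (n + 1 : ℝ) := by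
        intro n
        have hfne : f ω ≠ 0 := (hf ω).ne'
        rw [← h0, add_zero]
        field_simp
      have htop : ENNReal.ofReal (f ω) / ENNReal.ofReal (g ω) = ⊤ := by
        rw [← h0, ENNReal.ofReal_zero, ENNReal.div_zero (by simpa using hf ω)]
      rw [htop]
      simp only [hval]
      exact ENNReal.tendsto_ofReal_atTop.comp (Filter.tendsto_atTop_add_const_right _ 1
        tendsto_natCast_atTop_atTop)
    · -- g ω > 0 : real limit is f ω / g ω
      rw [← ENNReal.ofReal_div_of_pos h0]
      apply (ENNReal.continuous_ofReal.tendsto _).comp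
      have : Filter.Tendsto (fun n : ℕ => (1 / (n + 1 : ℝ)) * f ω + g ω) Filter.atTop
          (nhds (g ω)) := by
        have h1 : Filter.Tendsto (fun n : ℕ => (1 / (n + 1 : ℝ))) Filter.atTop (nhds 0) :=
          tendsto_one_div_add_atTop_nhds_zero_nat
        have := (h1.mul_const (f ω)).add_const (g ω)
        simpa using this
      have := Filter.Tendsto.div (tendsto_const_nhds (x := f ω)) this h0.ne'
      exact this
  calc (⨆ n : ℕ, ∫⁻ ω, ENNReal.ofReal (f ω / ((1 / (n + 1)) * f ω + g ω)) ∂μ)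
      = ∫⁻ ω, ⨆ n : ℕ, ENNReal.ofReal (f ω / ((1 / (n + 1)) * f ω + g ω)) ∂μ := by
        rw [lintegral_iSup (fun n => (F_meas hfm hgm _).ennreal_ofReal)
          (fun m n h => fun ω => hmono ω h)]
    _ = _ := by
        congr 1
        ext ω
        exact hsup ω

end SingleAssetAux

end Aux

/-- The paper's characterization of the exogenous-asset component `α̂` of the relative
growth optimal strategy for a single exogenous asset with no short sales and no other
constraints: with `φ(α) = E[XW/(αXW + Y)]` and `E[XW/Y] ∈ (0,∞]` (convention
`c/0 = +∞` for `c > 0`, computed here by the `ℝ≥0∞`-valued integral):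
(i) if `E[XW/Y] ≤ 1` then `φ(α) < 1` for every `α ∈ (0,1]`; and
(ii) if `E[XW/Y] > 1` then `φ(α) = 1` has a unique solution `α ∈ (0,1]`. -/
theorem single_asset_alpha_characterization
    {Ω : Type*} [MeasurableSpace Ω] (μ : Measure Ω) [IsProbabilityMeasure μ]
    (X Y : Ω → ℝ) (hXm : Measurable X) (hYm : Measurable Y)
    (hX : ∀ ω, 0 < X ω) (hY : ∀ ω, 0 ≤ Y ω)
    (W : ℝ) (hW : 0 < W) :
    ((∫⁻ ω, ENNReal.ofReal (X ω * W) / ENNReal.ofReal (Y ω) ∂μ) ≤ 1 →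
      ∀ a : ℝ, 0 < a → a ≤ 1 →
        ∫ ω, X ω * W / (a * X ω * W + Y ω) ∂μ < 1) ∧
    (1 < (∫⁻ ω, ENNReal.ofReal (X ω * W) / ENNReal.ofReal (Y ω) ∂μ) →
      ∃! a : ℝ, 0 < a ∧ a ≤ 1 ∧
        ∫ ω, X ω * W / (a * X ω * W + Y ω) ∂μ = 1) := by
  have hfm : Measurable (fun ω => X ω * W) := hXm.mul_const W
  have hfp : ∀ ω, 0 < X ω * W := fun ω => mul_pos (hX ω) hW
  have key : ∀ a : ℝ, (∫ ω, X ω * W / (a * X ω * W + Y ω) ∂μ)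
      = ∫ ω, X ω * W / (a * (X ω * W) + Y ω) ∂μ := by
    intro a; congr 1; funext ω; rw [mul_assoc]
  set φ : ℝ → ℝ := fun a => ∫ ω, X ω * W / (a * (X ω * W) + Y ω) ∂μ with hφ
  have hratio_meas : Measurable (fun ω => ENNReal.ofReal (X ω * W) / ENNReal.ofReal (Y ω)) :=
    hfm.ennreal_ofReal.div hYm.ennreal_ofReal
  have hofReal : ∀ {a : ℝ}, 0 < a → ENNReal.ofReal (φ a)
      = ∫⁻ ω, ENNReal.ofReal (X ω * W / (a * (X ω * W) + Y ω)) ∂μ := fun ha =>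
    SingleAssetAux.ofReal_integral hfm hYm hfp hY ha
  have hanti : ∀ {a b : ℝ}, 0 < a → a < b → φ b < φ a := fun ha hab =>
    SingleAssetAux.phi_strictAnti hfm hYm hfp hY ha hab
  constructor
  · -- part (i)
    intro hL a ha _
    rw [key a]
    have h1 : (∫⁻ ω, ENNReal.ofReal (X ω * W / (a * (X ω * W) + Y ω)) ∂μ)
        < ∫⁻ ω, ENNReal.ofReal (X ω * W) / ENNReal.ofReal (Y ω) ∂μ :=
      lintegral_strict_mono (IsProbabilityMeasure.ne_zero μ) hratio_meas.aemeasurable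
        (SingleAssetAux.lint_ne_top hfm hYm hfp hY ha)
        (Filter.Eventually.of_forall fun ω => SingleAssetAux.F_lt_ratio hfp hY ha ω)
    have h2 : ENNReal.ofReal (φ a) < ENNReal.ofReal 1 := by
      rw [hofReal ha, ENNReal.ofReal_one]; exact h1.trans_le hL
    exact (ENNReal.ofReal_lt_ofReal_iff_of_nonneg
      (integral_nonneg fun ω => SingleAssetAux.F_nonneg hfp hY ha ω)).1 h2
  · -- part (ii)
    intro hL
    have huniq : ∀ a b : ℝ, (0 < a ∧ a ≤ 1 ∧ φ a = 1) → (0 < b ∧ b ≤ 1 ∧ φ b = 1) → a = b := by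
      rintro a b ⟨ha0, -, ha⟩ ⟨hb0, -, hb⟩
      by_contra hne
      rcases lt_or_gt_of_ne hne with h | h
      · exact absurd (ha ▸ hb ▸ hanti ha0 h) (lt_irrefl 1)
      · exact absurd (ha ▸ hb ▸ hanti hb0 h) (lt_irrefl 1)
    have hφ1 : φ 1 ≤ 1 := by
      calc φ 1 ≤ ∫ (_ : Ω), (1:ℝ) ∂μ := by
            refine integral_mono (SingleAssetAux.F_integrable hfm hYm hfp hY one_pos)
              (integrable_const 1) fun ω => ?_
            rw [div_le_one (SingleAssetAux.denom_pos hfp hY one_pos ω)]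
            nlinarith [hfp ω, hY ω]
        _ = 1 := by simp
    suffices hex : ∃ a : ℝ, 0 < a ∧ a ≤ 1 ∧ φ a = 1 by
      obtain ⟨a, ha⟩ := hex
      refine ⟨a, ?_, fun b hb => huniq b a ?_ ha⟩
      · refine ⟨ha.1, ha.2.1, ?_⟩
        rw [key a]; exact ha.2.2
      · refine ⟨hb.1, hb.2.1, ?_⟩
        show (∫ ω, X ω * W / (b * (X ω * W) + Y ω) ∂μ) = 1
        rw [← key b]; exact hb.2.2
    rcases eq_or_lt_of_le hφ1 with h1 | h1
    · exact ⟨1, one_pos, le_refl 1, h1⟩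
    -- φ 1 < 1 ; find c with φ c > 1 via monotone convergence
    have hsup := SingleAssetAux.lintegral_sup (μ := μ) hfm hYm hfp hY
    have hexn : ∃ n : ℕ, 1 < ∫⁻ ω,
        ENNReal.ofReal (X ω * W / ((1 / (n + 1)) * (X ω * W) + Y ω)) ∂μ := by
      by_contra hcon
      push_neg at hcon
      have : (⨆ n : ℕ, ∫⁻ ω,
          ENNReal.ofReal (X ω * W / ((1 / (n + 1)) * (X ω * W) + Y ω)) ∂μ) ≤ 1 :=
        iSup_le hcon
      rw [hsup] at this
      exact absurd hL (not_lt.2 this)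
    obtain ⟨n, hn⟩ := hexn
    set c : ℝ := 1 / (n + 1) with hc_def
    have hc0 : 0 < c := by positivity
    have hc1 : c ≤ 1 := by
      rw [hc_def, div_le_one (by positivity)]
      have : (0:ℝ) ≤ n := Nat.cast_nonneg n
      linarith
    have hφc : 1 < φ c := by
      by_contra hcon
      push_neg at hcon
      have := ENNReal.ofReal_le_ofReal hcon
      rw [hofReal hc0, ENNReal.ofReal_one] at this
      exact absurd hn (not_lt.2 this)
    have hcont : ContinuousOn φ (Set.Icc c 1) := fun a ha =>
      (SingleAssetAux.phi_continuousAt hfm hYm hfp hY (lt_of_lt_of_le hc0 ha.1)).continuousWithinAt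
    have hmem : (1:ℝ) ∈ Set.Icc (φ 1) (φ c) := ⟨h1.le, hφc.le⟩
    have := intermediate_value_Icc' hc1 hcont hmem
    obtain ⟨a, haI, hav⟩ := this
    exact ⟨a, lt_of_lt_of_le hc0 haI.1, haI.2, hav⟩
end
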